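/- arXiv:2012.12363 — 12 statements merged into one kernel-verified Lean document; each statement's English description precedes it below -/
import Mathlib

section
/- Let n ≥ 4 be an integer divisible by 4 and set d = n/2. Then every Hamiltonian cycle H on the complete graph with vertex set ZMod n satisfies Σ_{e ∈ H} c_{ℓ(e)} ≥ n − 2; equivalently, Σ_{i=1}^{d} c_i · t_i ≥ n − 2, where t_i is the number of edges of H of length i. (Validity of the circlet inequality.) -/
/-- The length of an edge of the complete graph on `ZMod n`:
`ℓ(i,j) = min(|i−j|, n−|i−j|)`, expressed as `min (i-j).val (j-i).val`. -/
def zLenSym {n : ℕ} : Sym2 (ZMod n) → ℕ :=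
  Sym2.lift ⟨fun i j => min (i - j).val (j - i).val, fun i j => min_comm _ _⟩

/-- The circlet cost of an edge: its length `ℓ` if `ℓ` is odd, and `d − ℓ` if `ℓ` is even. -/
def circCost {n : ℕ} (d : ℕ) (e : Sym2 (ZMod n)) : ℕ :=
  if Odd (zLenSym e) then zLenSym e else d - zLenSym e

/-!
For `g : ZMod n` let `S_g` be the preimage, under multiplication by `μ = d + 1`, of the arc
`{g, g + 1, …, g + d - 1}`. As `d` is even, `μ² = 1`, and multiplication by `μ` fixes differences
of even length `ℓ` and shifts those of odd length by `d`, so it turns a difference of circlet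
cost `c` into one of length `d - c`. A difference of length `ℓ` has both ends on the same side
of exactly `n - 2ℓ` of the arcs, so an edge of cost `c` crosses `S_g` for all but `2c` values
of `g`. Summing over the edges of `H`, twice its circlet cost is `∑_g t_g`, where `t_g` is the
number of edges of `H` not crossing `S_g`. Since `H` is closed and has even length, every `t_g`
is even; and `t_g = 0` means that `S_g` is a colour class of the unique 2-colouring of `H`, which
happens for at most two `g` because the sets `S_g` are distinct. Hence the circlet cost is at
least `n - 2`.
-/

open Finset

section Cuts

variable {V : Type*}

def crossesCut (f : V → Bool) : Sym2 V → Bool :=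
  Sym2.lift ⟨fun a b => xor (f a) (f b), fun _ _ => Bool.xor_comm _ _⟩

@[simp] lemma crossesCut_mk (f : V → Bool) (a b : V) :
    crossesCut f s(a, b) = xor (f a) (f b) := rfl

lemma crossesCut_xor (f g : V → Bool) (e : Sym2 V) :
    crossesCut (fun x => xor (f x) (g x)) e = xor (crossesCut f e) (crossesCut g e) := by
  induction e using Sym2.ind with
  | _ a b => simp only [crossesCut_mk]; cases f a <;> cases f b <;> cases g a <;> cases g b <;> rfl

namespace SimpleGraph.Walk

variable {G : SimpleGraph V} {u v : V}

lemma even_countP_crossesCut_iff (f : V → Bool) (w : G.Walk u v) :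
    Even (w.edges.countP (crossesCut f)) ↔ f u = f v := by
  induction w with
  | nil => simp
  | @cons a b c _ q ih =>
    rw [edges_cons, List.countP_cons, crossesCut_mk]
    cases ha : f a <;> cases hb : f b <;> cases hc : f c <;>
      simp_all [Nat.even_add_one]

lemma apply_eq_of_forall_crossesCut_eq_false {f : V → Bool} (w : G.Walk u v)
    (hw : ∀ e ∈ w.edges, crossesCut f e = false) {x : V} (hx : x ∈ w.support) :
    f x = f u := by
  classical
  have h0 : (w.takeUntil x hx).edges.countP (crossesCut f) = 0 :=
    List.countP_eq_zero.2 fun e he => by simpa using hw e (w.edges_takeUntil_subset_edges hx he)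
  exact ((even_countP_crossesCut_iff f _).1 (by rw [h0]; exact Even.zero)).symm

lemma card_filter_forall_crossesCut_le_two {ι : Type*} [Fintype ι] {cut : ι → V → Bool}
    (hcut : Function.Injective cut) (w : G.Walk u v) (hw : ∀ x, x ∈ w.support) :
    #{i | ∀ e ∈ w.edges, crossesCut (cut i) e = true} ≤ 2 := by
  classical
  set Z : Finset ι := {i | ∀ e ∈ w.edges, crossesCut (cut i) e = true}
  rcases Z.eq_empty_or_nonempty with hZ | ⟨i₀, hi₀⟩
  · simp [hZ]
  have hmaps : Set.MapsTo cut Z ({cut i₀, fun x => !cut i₀ x} : Finset (V → Bool)) := by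
    intro i hi
    have hi₀ : ∀ e ∈ w.edges, _ := (mem_filter.1 hi₀).2
    have hi : ∀ e ∈ w.edges, _ := (mem_filter.1 hi).2
    have hconst : cut i = fun x => xor (cut i₀ x) (xor (cut i₀ u) (cut i u)) := by
      funext x
      rw [← w.apply_eq_of_forall_crossesCut_eq_false (f := fun x => xor (cut i₀ x) (cut i x))
        (fun e he => by rw [crossesCut_xor, hi₀ e he, hi e he]; rfl) (hw x)]
      cases cut i₀ x <;> cases cut i x <;> rfl
    generalize xor (cut i₀ u) (cut i u) = c at hconst
    cases c <;> simp [hconst]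
  exact (card_le_card_of_injOn cut hmaps hcut.injOn).trans card_le_two

lemma IsTrail.even_card_filter_crossesCut_eq_false [DecidableEq V] {w : G.Walk u u}
    (hw : w.IsTrail) (hlen : Even w.length) (f : V → Bool) :
    Even #{e ∈ w.edges.toFinset | crossesCut f e = false} := by
  have hcard : #{e ∈ w.edges.toFinset | crossesCut f e = false}
      = w.edges.length - w.edges.countP (crossesCut f) := by
    rw [List.length_eq_countP_add_countP (crossesCut f), Nat.add_sub_cancel_left,
      List.countP_eq_length_filter, ← (hw.edges_nodup.filter _).dedup, ← List.card_toFinset,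
      List.toFinset_filter]
    simp
  rw [hcard, Nat.even_sub (List.countP_le_length), length_edges]
  simp [hlen, even_countP_crossesCut_iff]

end SimpleGraph.Walk

end Cuts

lemma two_mul_card_sub_le_sum_of_even {ι : Type*} [Fintype ι] {t : ι → ℕ} {k : ℕ}
    (heven : ∀ i, Even (t i)) (hzero : #{i | t i = 0} ≤ k) :
    2 * (Fintype.card ι - k) ≤ ∑ i, t i := by
  classical
  have hpos : ∀ i ∈ ({i | t i ≠ 0} : Finset ι), 2 ≤ t i := fun i hi => by
    obtain ⟨m, hm⟩ := heven i
    have := (mem_filter.1 hi).2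
    omega
  have hcard : #{i | t i = 0} + #{i | t i ≠ 0} = Fintype.card ι :=
    card_filter_add_card_filter_not _
  calc 2 * (Fintype.card ι - k) ≤ #{i | t i ≠ 0} • 2 := by rw [smul_eq_mul]; omega
    _ ≤ ∑ i ∈ {i | t i ≠ 0}, t i := card_nsmul_le_sum _ _ _ hpos
    _ ≤ ∑ i, t i := sum_le_sum_of_subset (subset_univ _)

lemma card_filter_range_add_mod_lt_iff {n d α : ℕ} (hnd : n = 2 * d) (hα : α < n) :
    #{t ∈ range n | (t + α) % n < d ↔ t < d} = n - 2 * min α (n - α) := by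
  have hmem : ∀ t, t ∈ {t ∈ range n | (t + α) % n < d ↔ t < d} ↔
      t < n ∧ ((if t + α < n then t + α else t + α - n) < d ↔ t < d) := by
    intro t
    rw [mem_filter, mem_range, and_congr_right_iff]
    intro ht
    split_ifs
    · rw [Nat.mod_eq_of_lt ‹_›]
    · rw [Nat.mod_eq_sub_mod (by omega), Nat.mod_eq_of_lt (by omega)]
  by_cases hαd : α ≤ d
  · have heq : {t ∈ range n | (t + α) % n < d ↔ t < d}
        = range (d - α) ∪ Ico d (2 * d - α) := by
      ext t
      rw [hmem, mem_union, mem_range, mem_Ico]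
      split_ifs <;> omega
    rw [heq, card_union_of_disjoint (disjoint_left.2 fun t => by simp; omega), card_range,
      Nat.card_Ico]
    omega
  · have heq : {t ∈ range n | (t + α) % n < d ↔ t < d}
        = Ico (2 * d - α) d ∪ Ico (3 * d - α) (2 * d) := by
      ext t
      rw [hmem, mem_union, mem_Ico, mem_Ico]
      split_ifs <;> omega
    rw [heq, card_union_of_disjoint (disjoint_left.2 fun t => by simp; omega), Nat.card_Ico,
      Nat.card_Ico]
    omega

section Circle

variable {n d : ℕ}

lemma zLenSym_mk [NeZero n] (a b : ZMod n) :
    zLenSym s(a, b) = min (a - b).val (n - (a - b).val) := by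
  change min (a - b).val (b - a).val = _
  rw [show b - a = -(a - b) by ring, ZMod.neg_val]
  split_ifs with h <;> simp [h]

def halfCut (d : ℕ) (g x : ZMod n) : Bool := decide ((x - g).val < d)

lemma halfCut_injective [NeZero n] (hd : 0 < d) (hdn : 2 * d ≤ n) :
    Function.Injective (halfCut d : ZMod n → ZMod n → Bool) := by
  intro g h hgh
  have h1 : (g - h).val < d := by simpa [halfCut, hd] using (congrFun hgh g).symm
  have h2 : (h - g).val < d := by simpa [halfCut, hd] using congrFun hgh h
  by_contra hne
  rw [show h - g = -(g - h) by ring, ZMod.neg_val, if_neg (sub_ne_zero.2 hne)] at h2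
  have := ZMod.val_lt (g - h)
  omega

lemma card_halfCut_eq [NeZero n] (hnd : n = 2 * d) (a b : ZMod n) :
    #{g | halfCut d g a = halfCut d g b} = n - 2 * zLenSym s(a, b) := by
  rw [zLenSym_mk, ← card_filter_range_add_mod_lt_iff hnd (ZMod.val_lt _)]
  refine card_nbij' (fun g => (b - g).val) (fun t => b - t) ?_ ?_ ?_ ?_
  · intro g hg
    simp only [coe_filter, mem_univ, true_and, Set.mem_ofPred_eq, halfCut, decide_eq_decide,
      mem_range] at hg ⊢
    refine ⟨ZMod.val_lt _, ?_⟩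
    rw [← ZMod.val_add, show b - g + (a - b) = a - g by ring]
    exact hg
  · intro t ht
    simp only [coe_filter, mem_univ, true_and, Set.mem_ofPred_eq, halfCut, decide_eq_decide,
      mem_range] at ht ⊢
    rw [sub_sub_cancel, show a - (b - t) = t + (a - b) by ring, ZMod.val_add,
      ZMod.val_natCast_of_lt ht.1]
    exact ht.2
  · intro g _
    simp
  · intro t ht
    simp only [coe_filter, mem_range] at ht
    simp [ZMod.val_natCast_of_lt ht.1]

lemma circCost_le [NeZero n] (hnd : n = 2 * d) (e : Sym2 (ZMod n)) :
    circCost d e ≤ d := by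
  induction e using Sym2.ind with
  | _ a b =>
    have := ZMod.val_lt (a - b)
    unfold circCost
    split_ifs <;> rw [zLenSym_mk] <;> omega

def twist (d : ℕ) : ZMod n := (d + 1 : ℕ)

lemma twist_mul_twist (hnd : n = 2 * d) (hd : Even d) : (twist d : ZMod n) * twist d = 1 := by
  obtain ⟨k, rfl⟩ := hd
  unfold twist
  have h : (((k + k + 1) * (k + k + 1) : ℕ) : ZMod n) = ((k + 1) * n + 1 : ℕ) := by
    rw [hnd]; ring_nf
  push_cast at h
  simpa using h

lemma zLenSym_twist_mul [NeZero n] (hnd : n = 2 * d) (hd : Even d) (i j : ZMod n) :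
    zLenSym s(twist d * i, twist d * j) = d - circCost d s(i, j) := by
  obtain ⟨k, hk⟩ := hd
  have hd2 : 2 ≤ d := by
    have := NeZero.ne n
    omega
  set β := (i - j).val with hβ
  have hβn : β < n := ZMod.val_lt _
  have hval : (twist d * i - twist d * j).val = (d + 1) * β % n := by
    rw [← mul_sub, ZMod.val_mul, twist, ZMod.val_natCast_of_lt (by omega)]
  unfold circCost
  rw [zLenSym_mk, zLenSym_mk, hval, ← hβ]
  rcases Nat.even_or_odd β with ⟨m, hm⟩ | ⟨m, hm⟩
  · rw [show (d + 1) * β = β + m * n by rw [hnd, hm]; ring, Nat.add_mul_mod_self_right,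
      Nat.mod_eq_of_lt hβn, if_neg (by rw [Nat.odd_iff]; omega)]
    omega
  · rw [show (d + 1) * β = (β + d) + m * n by rw [hnd, hm]; ring, Nat.add_mul_mod_self_right,
      if_pos (by rw [Nat.odd_iff]; omega)]
    rcases lt_or_gt_of_ne (show β ≠ d by omega) with hlt | hgt
    · rw [Nat.mod_eq_of_lt (by omega)]; omega
    · rw [Nat.mod_eq_sub_mod (by omega), Nat.mod_eq_of_lt (by omega)]; omega

def circletCut (d : ℕ) (g x : ZMod n) : Bool := halfCut d g (twist d * x)

lemma circletCut_injective [NeZero n] (hnd : n = 2 * d) (hd : Even d) :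
    Function.Injective (circletCut d : ZMod n → ZMod n → Bool) := by
  intro g h hgh
  refine halfCut_injective (by have := NeZero.pos n; omega) hnd.ge (funext fun y => ?_)
  have hy := congrFun hgh (twist d * y)
  simp only [circletCut, ← mul_assoc, twist_mul_twist hnd hd, one_mul] at hy
  exact hy

lemma card_filter_crossesCut_circletCut_eq_false [NeZero n] (hnd : n = 2 * d) (hd : Even d)
    (e : Sym2 (ZMod n)) : #{g | crossesCut (circletCut d g) e = false} = 2 * circCost d e := by
  induction e using Sym2.ind with
  | _ i j =>
    have := circCost_le hnd s(i, j)
    calc #{g | crossesCut (circletCut d g) s(i, j) = false}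
        _ = #{g | halfCut d g (twist d * i) = halfCut d g (twist d * j)} := by
          congr 1; ext g; simp [circletCut]
        _ = n - 2 * zLenSym s(twist d * i, twist d * j) := card_halfCut_eq hnd _ _
        _ = 2 * circCost d s(i, j) := by rw [zLenSym_twist_mul hnd hd]; omega

end Circle

theorem circlet_inequality_valid_general (n : ℕ) (h4 : 4 ∣ n)
    (v : ZMod n) (w : (⊤ : SimpleGraph (ZMod n)).Walk v v)
    (hw : w.IsHamiltonianCycle) :
    n - 2 ≤ ∑ e ∈ w.edges.toFinset, circCost (n / 2) e := by
  rcases n.eq_zero_or_pos with rfl | hpos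
  · simp
  have : NeZero n := ⟨hpos.ne'⟩
  obtain ⟨k, hk⟩ := h4
  obtain ⟨d, hnd, hd⟩ : ∃ d, n = 2 * d ∧ Even d := ⟨k + k, by omega, ⟨k, rfl⟩⟩
  rw [show n / 2 = d by omega]
  set t : ZMod n → ℕ :=
    fun g => #{e ∈ w.edges.toFinset | crossesCut (circletCut d g) e = false}
  have hsum : ∑ g, t g = 2 * ∑ e ∈ w.edges.toFinset, circCost d e := by
    simp only [t, card_filter]
    rw [sum_comm, mul_sum]
    refine sum_congr rfl fun e _ => ?_
    rw [← card_filter_crossesCut_circletCut_eq_false hnd hd, card_filter]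
  have heven : ∀ g, Even (t g) := fun g =>
    hw.isCycle.isCircuit.isTrail.even_card_filter_crossesCut_eq_false
      (by rw [hw.length_eq, ZMod.card]; exact ⟨d, by omega⟩) _
  have hzero : #{g | t g = 0} ≤ 2 := by
    refine le_trans (card_le_card fun g hg => ?_)
      (w.card_filter_forall_crossesCut_le_two (circletCut_injective hnd hd) hw.mem_support)
    simpa [t, filter_eq_empty_iff] using hg
  have := two_mul_card_sub_le_sum_of_even heven hzero
  rw [ZMod.card, hsum] at this
  omega

/-- Validity of the circlet inequality: for `n ≥ 4` divisible by 4 and `d = n/2`,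
every Hamiltonian cycle on the complete graph on `ZMod n` has circlet cost at least `n − 2`. -/
theorem circlet_inequality_valid (n : ℕ) (hn : 4 ≤ n) (h4 : 4 ∣ n)
    (v : ZMod n) (w : (⊤ : SimpleGraph (ZMod n)).Walk v v)
    (hw : w.IsHamiltonianCycle) :
    n - 2 ≤ ∑ e ∈ w.edges.toFinset, circCost (n / 2) e :=
  circlet_inequality_valid_general n h4 v w hw
end

section
/- Let n be divisible by 4, d = n/2, and let H be a Hamiltonian cycle on the complete graph with vertex set ZMod n such that Σ_{i=1}^{d} c_i t_i < n − 2. Then t_1 + 2·t_d > n + 2. -/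
/-- Lemma 1: if a Hamiltonian cycle on `ZMod n` (with `4 ∣ n`, `d = n/2`) has circlet cost
strictly less than `n − 2`, then `t_1 + 2·t_d > n + 2`. -/
theorem circlet_lemma1 (n : ℕ) (h4 : 4 ∣ n)
    (v : ZMod n) (w : (⊤ : SimpleGraph (ZMod n)).Walk v v)
    (hw : w.IsHamiltonianCycle)
    (hcost : ∑ e ∈ w.edges.toFinset, circCost (n / 2) e < n - 2) :
    n + 2 < (w.edges.toFinset.filter (fun e => zLenSym e = 1)).card
      + 2 * (w.edges.toFinset.filter (fun e => zLenSym e = n / 2)).card := by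
  rcases Nat.eq_zero_or_pos n with hn0 | hn0
  · subst hn0; simp at hcost
  haveI : NeZero n := ⟨hn0.ne'⟩
  obtain ⟨k, hk⟩ := h4
  have hn4 : 4 ≤ n := by omega
  have hd : n / 2 = 2 * k := by omega
  -- every edge has length between 1 and n/2
  have hedge : ∀ e ∈ w.edges.toFinset, 1 ≤ zLenSym e ∧ zLenSym e ≤ n / 2 := by
    intro e he
    rw [List.mem_toFinset] at he
    have hE := w.edges_subset_edgeSet he
    induction e with
    | _ i j =>
      rw [SimpleGraph.mem_edgeSet, SimpleGraph.top_adj] at hE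
      have h1 : i - j ≠ 0 := sub_ne_zero.mpr hE
      haveI : NeZero (i - j) := ⟨h1⟩
      have hv1 : 0 < (i - j).val := ZMod.val_pos.mpr h1
      have hv2 : (j - i).val = n - (i - j).val := by
        have : j - i = -(i - j) := by ring
        rw [this, ZMod.val_neg_of_ne_zero]
      have hlt : (i - j).val < n := ZMod.val_lt _
      simp only [zLenSym, Sym2.lift_mk]
      rw [hv2]
      omega
  -- the cycle has n edges
  have hcard : w.edges.toFinset.card = n := by
    rw [List.toFinset_card_of_nodup hw.isCycle.edges_nodup,
      SimpleGraph.Walk.length_edges, hw.length_eq, ZMod.card]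
  set S := w.edges.toFinset with hS
  set A := S.filter (fun e => zLenSym e = 1) with hA
  set B := S.filter (fun e => zLenSym e = n / 2) with hB
  set C := S.filter (fun e => ¬ zLenSym e = 1 ∧ ¬ zLenSym e = n / 2) with hC
  -- cardinality bookkeeping
  have hT1 : A.card + (S.filter (fun e => ¬ zLenSym e = 1)).card = n := by
    rw [hA, Finset.card_filter_add_card_filter_not, hcard]
  set T := S.filter (fun e => ¬ zLenSym e = 1) with hT
  have hT2 : (T.filter (fun e => zLenSym e = n / 2)).card
      + (T.filter (fun e => ¬ zLenSym e = n / 2)).card = T.card := by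
    rw [Finset.card_filter_add_card_filter_not]
  have hTB : T.filter (fun e => zLenSym e = n / 2) = B := by
    rw [hT, Finset.filter_filter, hB]
    apply Finset.filter_congr
    intro e _
    constructor
    · exact fun h => h.2
    · intro h; exact ⟨by omega, h⟩
  have hTC : T.filter (fun e => ¬ zLenSym e = n / 2) = C := by
    rw [hT, Finset.filter_filter, hC]
  -- lower bound on the cost
  have hAcost : ∀ e ∈ A, circCost (n / 2) e = 1 := by
    intro e he
    have h1 : zLenSym e = 1 := (Finset.mem_filter.mp he).2
    simp [circCost, h1]
  have hCcost : ∀ e ∈ C, 2 ≤ circCost (n / 2) e := by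
    intro e he
    obtain ⟨heS, h1, h2⟩ := Finset.mem_filter.mp he
    obtain ⟨hl, hu⟩ := hedge e heS
    unfold circCost
    by_cases ho : Odd (zLenSym e)
    · rw [if_pos ho]; obtain ⟨m, hm⟩ := ho; omega
    · rw [if_neg ho]
      rw [Nat.not_odd_iff_even] at ho
      obtain ⟨m, hm⟩ := ho
      omega
  have hdisj : Disjoint A C := by
    rw [Finset.disjoint_filter]
    intro e _ h1 h2
    exact h2.1 h1
  have hsub : A ∪ C ⊆ S := Finset.union_subset (Finset.filter_subset _ _) (Finset.filter_subset _ _)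
  have hsum : A.card + 2 * C.card ≤ ∑ e ∈ S, circCost (n / 2) e := by
    calc A.card + 2 * C.card = ∑ e ∈ A, circCost (n / 2) e + ∑ e ∈ C, 2 := by
          rw [Finset.sum_congr rfl hAcost, Finset.sum_const, smul_eq_mul, mul_one,
            Finset.sum_const, smul_eq_mul, mul_comm]
      _ ≤ ∑ e ∈ A, circCost (n / 2) e + ∑ e ∈ C, circCost (n / 2) e := by
          gcongr with e he; exact hCcost e he
      _ = ∑ e ∈ A ∪ C, circCost (n / 2) e := (Finset.sum_union hdisj).symm
      _ ≤ ∑ e ∈ S, circCost (n / 2) e := Finset.sum_le_sum_of_subset hsub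
  rw [hTB, hTC] at hT2
  have hTcard : T.card = n - A.card := by omega
  omega
end

section
/- Let n ≥ 8 be divisible by 4 and d = n/2, and let s, t ∈ S = {3,…,d} ∪ {d+3,…,n} with s ≠ t. Then ℓ'(s', t') = ℓ(s, t) if s and t both lie in {3,…,d} or both lie in {d+3,…,n}, and ℓ'(s', t') = ℓ(s, t) − 2 otherwise. -/
/-- Edge length on the graph with `n` vertices labeled `1,…,n`:
`ℓ(i,j) = min(|i−j|, n−|i−j|)`. -/
def ell (n i j : ℕ) : ℕ := min (Nat.dist i j) (n - Nat.dist i j)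

/-- Relabeling after contraction: `s' = s − 2` if `s ≤ d` and `s' = s − 4` otherwise. -/
def relabel (d s : ℕ) : ℕ := if s ≤ d then s - 2 else s - 4

/-- Lengths under contraction: for `s, t ∈ S = {3,…,d} ∪ {d+3,…,n}` with `s ≠ t`,
the contracted length `ℓ'(s',t') = ell (n-4) s' t'` equals `ℓ(s,t)` when `s` and `t`
lie in the same group, and equals `ℓ(s,t) − 2` otherwise. -/
theorem length_under_contraction (n : ℕ) (hn : 8 ≤ n) (h4 : 4 ∣ n) (d : ℕ) (hd : d = n / 2)
    (s t : ℕ)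
    (hs : (3 ≤ s ∧ s ≤ d) ∨ (d + 3 ≤ s ∧ s ≤ n))
    (ht : (3 ≤ t ∧ t ≤ d) ∨ (d + 3 ≤ t ∧ t ≤ n))
    (hst : s ≠ t) :
    ((s ≤ d ∧ t ≤ d) ∨ (d + 3 ≤ s ∧ d + 3 ≤ t) →
      ell (n - 4) (relabel d s) (relabel d t) = ell n s t) ∧
    (¬((s ≤ d ∧ t ≤ d) ∨ (d + 3 ≤ s ∧ d + 3 ≤ t)) →
      ell (n - 4) (relabel d s) (relabel d t) = ell n s t - 2) := by
  have hd2 : 2 * d = n := by omega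
  clear hd
  unfold ell relabel
  have key : ∀ a b : ℕ, min (Nat.dist a b) (n - 4 - Nat.dist a b) =
      min ((a-b)+(b-a)) (n - 4 - ((a-b)+(b-a))) := by
    intro a b; rw [Nat.dist]
  rcases le_or_gt s d with h1 | h1 <;> rcases le_or_gt t d with h2 | h2
  · rw [if_pos h1, if_pos h2]
    simp only [Nat.dist]
    constructor <;> intro h <;> omega
  · rw [if_pos h1, if_neg (not_le.mpr h2)]
    simp only [Nat.dist]
    constructor <;> intro h <;> omega
  · rw [if_neg (not_le.mpr h1), if_pos h2]
    simp only [Nat.dist]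
    constructor <;> intro h <;> omega
  · rw [if_neg (not_le.mpr h1), if_neg (not_le.mpr h2)]
    simp only [Nat.dist]
    constructor <;> intro h <;> omega
end

section
/- Let n ≥ 8 be divisible by 4 and d = n/2, and let s, t ∈ S = {3,…,d} ∪ {d+3,…,n} with s ≠ t. Then c'_{s',t'} = c_{s,t} if either (s and t lie in the same one of the two groups {3,…,d}, {d+3,…,n} and s ≢ t (mod 2)) or (s and t lie in different groups and s ≡ t (mod 2)); in all other cases c'_{s',t'} = c_{s,t} − 2. In particular, c'_{s',t'} ≤ c_{s,t} always holds. -/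
/-- Circlet edge cost with parameters `n` and `d`: `ℓ(i,j)` if `ℓ(i,j)` is odd,
`d − ℓ(i,j)` if even.  The contracted cost `c'` is `cost (n-4) (d-2)`. -/
def cost (n d i j : ℕ) : ℕ := if Odd (ell n i j) then ell n i j else d - ell n i j

private lemma ell_comm (n i j : ℕ) : ell n i j = ell n j i := by
  simp only [ell, Nat.dist]
  omega

private lemma ell_left (k s t : ℕ) (hk : 2 ≤ k) (hs1 : 3 ≤ s) (hs2 : s ≤ 2*k)
    (ht1 : 3 ≤ t) (ht2 : t ≤ 2*k) :
    ell (4*k) s t = s - t + (t - s) ∧ ell (4*k-4) (s-2) (t-2) = s - t + (t - s) := by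
  simp only [ell, Nat.dist]
  omega

private lemma ell_right (k s t : ℕ) (hk : 2 ≤ k) (hs1 : 2*k+3 ≤ s) (hs2 : s ≤ 4*k)
    (ht1 : 2*k+3 ≤ t) (ht2 : t ≤ 4*k) :
    ell (4*k) s t = s - t + (t - s) ∧ ell (4*k-4) (s-4) (t-4) = s - t + (t - s) := by
  simp only [ell, Nat.dist]
  omega

private lemma ell_cross (k s t : ℕ) (hk : 2 ≤ k) (hs1 : 3 ≤ s) (hs2 : s ≤ 2*k)
    (ht1 : 2*k+3 ≤ t) (ht2 : t ≤ 4*k) :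
    ell (4*k-4) (s-2) (t-4) + 2 = ell (4*k) s t ∧ 3 ≤ ell (4*k) s t ∧
      ell (4*k) s t ≤ 2*k ∧ ell (4*k) s t % 2 = (s + t) % 2 := by
  simp only [ell, Nat.dist]
  omega

/-- Costs under contraction (Proposition on cost decrease): for `s, t` in
`S = {3,…,d} ∪ {d+3,…,n}` with `s ≠ t`, the contracted cost `c'_{s',t'}` equals `c_{s,t}`
if (same group and opposite parity) or (different groups and same parity), and equals
`c_{s,t} − 2` in all other cases; in particular `c'_{s',t'} ≤ c_{s,t}`. -/
theorem cost_under_contraction (n : ℕ) (hn : 8 ≤ n) (h4 : 4 ∣ n) (d : ℕ) (hd : d = n / 2)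
    (s t : ℕ)
    (hs : (3 ≤ s ∧ s ≤ d) ∨ (d + 3 ≤ s ∧ s ≤ n))
    (ht : (3 ≤ t ∧ t ≤ d) ∨ (d + 3 ≤ t ∧ t ≤ n))
    (hst : s ≠ t) :
    (((((s ≤ d ∧ t ≤ d) ∨ (d + 3 ≤ s ∧ d + 3 ≤ t)) ∧ ¬(s % 2 = t % 2)) ∨
      (¬((s ≤ d ∧ t ≤ d) ∨ (d + 3 ≤ s ∧ d + 3 ≤ t)) ∧ s % 2 = t % 2)) →
      cost (n - 4) (d - 2) (relabel d s) (relabel d t) = cost n d s t) ∧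
    (¬(((((s ≤ d ∧ t ≤ d) ∨ (d + 3 ≤ s ∧ d + 3 ≤ t)) ∧ ¬(s % 2 = t % 2)) ∨
      (¬((s ≤ d ∧ t ≤ d) ∨ (d + 3 ≤ s ∧ d + 3 ≤ t)) ∧ s % 2 = t % 2))) →
      cost (n - 4) (d - 2) (relabel d s) (relabel d t) = cost n d s t - 2) ∧
    cost (n - 4) (d - 2) (relabel d s) (relabel d t) ≤ cost n d s t := by
  obtain ⟨k, rfl⟩ := h4
  subst hd
  have hk : 2 ≤ k := by omega
  simp only [show (4*k)/2 = 2*k by omega] at hs ht ⊢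
  rcases hs with ⟨hs1, hs2⟩ | ⟨hs1, hs2⟩ <;> rcases ht with ⟨ht1, ht2⟩ | ⟨ht1, ht2⟩
  · have hrs : relabel (2*k) s = s - 2 := if_pos hs2
    have hrt : relabel (2*k) t = t - 2 := if_pos ht2
    obtain ⟨h1, h2⟩ := ell_left k s t hk hs1 hs2 ht1 ht2
    simp only [cost, hrs, hrt, h1, h2, Nat.odd_iff]
    split_ifs <;> omega
  · have hrs : relabel (2*k) s = s - 2 := if_pos hs2
    have hrt : relabel (2*k) t = t - 4 := if_neg (by omega)
    obtain ⟨h1, h2, h3, h4⟩ := ell_cross k s t hk hs1 hs2 ht1 ht2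
    simp only [cost, hrs, hrt, Nat.odd_iff]
    split_ifs <;> omega
  · have hrs : relabel (2*k) s = s - 4 := if_neg (by omega)
    have hrt : relabel (2*k) t = t - 2 := if_pos ht2
    obtain ⟨h1, h2, h3, h4⟩ := ell_cross k t s hk ht1 ht2 hs1 hs2
    rw [show ell (4*k) t s = ell (4*k) s t from ell_comm ..] at h1 h2 h3 h4
    rw [show ell (4*k-4) (t-2) (s-4) = ell (4*k-4) (s-4) (t-2) from ell_comm ..] at h1
    simp only [cost, hrs, hrt, Nat.odd_iff]
    split_ifs <;> omega
  · have hrs : relabel (2*k) s = s - 4 := if_neg (by omega)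
    have hrt : relabel (2*k) t = t - 4 := if_neg (by omega)
    obtain ⟨h1, h2⟩ := ell_right k s t hk hs1 hs2 ht1 ht2
    simp only [cost, hrs, hrt, h1, h2, Nat.odd_iff]
    split_ifs <;> omega
end

section
/- Let n ≥ 8 be divisible by 4 and d = n/2, and let j, k ∈ S = {3,…,d} ∪ {d+3,…,n} with j ≠ k. Then c_{j,1} + c_{1,2} + c_{2,d+2} + c_{d+2,d+1} + c_{d+1,k} − c'_{j',k'} ≥ 4. (Consequently, contracting the path j, 1, 2, d+2, d+1, k to the single edge {j', k'} decreases the total cost by at least 4.) -/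

lemma relabel_lo {d s : ℕ} (h : s ≤ d) : relabel d s = s - 2 := if_pos h

lemma relabel_hi {d s : ℕ} (h : ¬ s ≤ d) : relabel d s = s - 4 := if_neg h

lemma costA_lo (m j : ℕ) (hm : 2 ≤ m) (h1 : 3 ≤ j) (h2 : j ≤ 2*m) :
    cost (4*m) (2*m) j 1 = if j % 2 = 0 then j - 1 else 2*m - j + 1 := by
  simp only [cost, ell, Nat.dist, Nat.odd_iff]
  split_ifs <;> omega

lemma costA_hi (m j : ℕ) (hm : 2 ≤ m) (h1 : 2*m+3 ≤ j) (h2 : j ≤ 4*m) :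
    cost (4*m) (2*m) j 1 = if j % 2 = 0 then 4*m - j + 1 else j - 2*m - 1 := by
  simp only [cost, ell, Nat.dist, Nat.odd_iff]
  split_ifs <;> omega

lemma costB_lo (m k : ℕ) (hm : 2 ≤ m) (h1 : 3 ≤ k) (h2 : k ≤ 2*m) :
    cost (4*m) (2*m) (2*m+1) k = if k % 2 = 0 then 2*m + 1 - k else k - 1 := by
  simp only [cost, ell, Nat.dist, Nat.odd_iff]
  split_ifs <;> omega

lemma costB_hi (m k : ℕ) (hm : 2 ≤ m) (h1 : 2*m+3 ≤ k) (h2 : k ≤ 4*m) :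
    cost (4*m) (2*m) (2*m+1) k = if k % 2 = 0 then k - 2*m - 1 else 4*m + 1 - k := by
  simp only [cost, ell, Nat.dist, Nat.odd_iff]
  split_ifs <;> omega

lemma cost12 (m : ℕ) (hm : 2 ≤ m) : cost (4*m) (2*m) 1 2 = 1 := by
  simp only [cost, ell, Nat.dist, Nat.odd_iff]
  split_ifs <;> omega

lemma cost2d2 (m : ℕ) (hm : 2 ≤ m) : cost (4*m) (2*m) 2 (2*m+2) = 0 := by
  simp only [cost, ell, Nat.dist, Nat.odd_iff]
  split_ifs <;> omega

lemma costd2d1 (m : ℕ) (hm : 2 ≤ m) : cost (4*m) (2*m) (2*m+2) (2*m+1) = 1 := by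
  simp only [cost, ell, Nat.dist, Nat.odd_iff]
  split_ifs <;> omega

lemma keyLL (m j k : ℕ) (hm : 2 ≤ m) (hj1 : 3 ≤ j) (hj2 : j ≤ 2*m)
    (hk1 : 3 ≤ k) (hk2 : k ≤ 2*m) :
    2 + cost (4*m-4) (2*m-2) (relabel (2*m) j) (relabel (2*m) k)
      ≤ cost (4*m) (2*m) j 1 + cost (4*m) (2*m) (2*m+1) k := by
  rw [costA_lo m j hm hj1 hj2, costB_lo m k hm hk1 hk2,
    relabel_lo hj2, relabel_lo hk2]
  simp only [cost, ell, Nat.dist, Nat.odd_iff]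
  split_ifs <;> omega

lemma keyLU (m j k : ℕ) (hm : 2 ≤ m) (hj1 : 3 ≤ j) (hj2 : j ≤ 2*m)
    (hk1 : 2*m+3 ≤ k) (hk2 : k ≤ 4*m) :
    2 + cost (4*m-4) (2*m-2) (relabel (2*m) j) (relabel (2*m) k)
      ≤ cost (4*m) (2*m) j 1 + cost (4*m) (2*m) (2*m+1) k := by
  rw [costA_lo m j hm hj1 hj2, costB_hi m k hm hk1 hk2,
    relabel_lo hj2, relabel_hi (by omega)]
  simp only [cost, ell, Nat.dist, Nat.odd_iff]
  split_ifs <;> omega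

lemma keyUL (m j k : ℕ) (hm : 2 ≤ m) (hj1 : 2*m+3 ≤ j) (hj2 : j ≤ 4*m)
    (hk1 : 3 ≤ k) (hk2 : k ≤ 2*m) :
    2 + cost (4*m-4) (2*m-2) (relabel (2*m) j) (relabel (2*m) k)
      ≤ cost (4*m) (2*m) j 1 + cost (4*m) (2*m) (2*m+1) k := by
  rw [costA_hi m j hm hj1 hj2, costB_lo m k hm hk1 hk2,
    relabel_hi (by omega), relabel_lo hk2]
  simp only [cost, ell, Nat.dist, Nat.odd_iff]
  split_ifs <;> omega

lemma keyUU (m j k : ℕ) (hm : 2 ≤ m) (hj1 : 2*m+3 ≤ j) (hj2 : j ≤ 4*m)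
    (hk1 : 2*m+3 ≤ k) (hk2 : k ≤ 4*m) :
    2 + cost (4*m-4) (2*m-2) (relabel (2*m) j) (relabel (2*m) k)
      ≤ cost (4*m) (2*m) j 1 + cost (4*m) (2*m) (2*m+1) k := by
  rw [costA_hi m j hm hj1 hj2, costB_hi m k hm hk1 hk2,
    relabel_hi (by omega), relabel_hi (by omega)]
  simp only [cost, ell, Nat.dist, Nat.odd_iff]
  split_ifs <;> omega

/-- Proposition (Type A contraction): for `j, k ∈ S = {3,…,d} ∪ {d+3,…,n}` with `j ≠ k`,
`c_{j,1} + c_{1,2} + c_{2,d+2} + c_{d+2,d+1} + c_{d+1,k} − c'_{j',k'} ≥ 4`. -/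
theorem contractionA_cost_drop (n : ℕ) (hn : 8 ≤ n) (h4 : 4 ∣ n) (d : ℕ) (hd : d = n / 2)
    (j k : ℕ)
    (hj : (3 ≤ j ∧ j ≤ d) ∨ (d + 3 ≤ j ∧ j ≤ n))
    (hk : (3 ≤ k ∧ k ≤ d) ∨ (d + 3 ≤ k ∧ k ≤ n))
    (hjk : j ≠ k) :
    (4 : ℤ) ≤ (cost n d j 1 : ℤ) + (cost n d 1 2 : ℤ) + (cost n d 2 (d + 2) : ℤ)
      + (cost n d (d + 2) (d + 1) : ℤ) + (cost n d (d + 1) k : ℤ)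
      - (cost (n - 4) (d - 2) (relabel d j) (relabel d k) : ℤ) := by
  obtain ⟨m, rfl⟩ := h4
  have hm : 2 ≤ m := by omega
  have hd2 : d = 2*m := by omega
  subst hd2
  have e1 := cost12 m hm
  have e2 := cost2d2 m hm
  have e3 := costd2d1 m hm
  have e4 : 4*m - 4 = 4*m - 4 := rfl
  have key : 2 + cost (4*m-4) (2*m-2) (relabel (2*m) j) (relabel (2*m) k)
      ≤ cost (4*m) (2*m) j 1 + cost (4*m) (2*m) (2*m+1) k := by
    rcases hj with ⟨hj1, hj2⟩ | ⟨hj1, hj2⟩ <;> rcases hk with ⟨hk1, hk2⟩ | ⟨hk1, hk2⟩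
    · exact keyLL m j k hm hj1 hj2 hk1 hk2
    · exact keyLU m j k hm hj1 hj2 hk1 hk2
    · exact keyUL m j k hm hj1 hj2 hk1 hk2
    · exact keyUU m j k hm hj1 hj2 hk1 hk2
  rw [e1, e2, e3]
  omega
end

section
/- Let n ≥ 8 be divisible by 4 and d = n/2, and let j, k ∈ S = {3,…,d} ∪ {d+3,…,n} with j ≠ k. Then the quantity c_{j,d+2} + c_{d+2,2} + c_{2,1} + c_{1,d+1} + c_{d+1,k} − c'_{j',k'} is at least 2 and is an even integer. -/
lemma ell_eq (n i j : ℕ) : ell n i j = min (i - j + (j - i)) (n - (i - j + (j - i))) := by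
  simp [ell, Nat.dist]

lemma cost_cases (n d i j : ℕ) :
    (ell n i j % 2 = 1 ∧ cost n d i j = ell n i j) ∨
    (ell n i j % 2 = 0 ∧ cost n d i j = d - ell n i j) := by
  unfold cost
  split_ifs with h
  · exact Or.inl ⟨Nat.odd_iff.mp h, rfl⟩
  · exact Or.inr ⟨Nat.even_iff.mp (Nat.not_odd_iff_even.mp h), rfl⟩

set_option maxHeartbeats 1000000 in
/-- Proposition (B1 contraction): for `j, k ∈ S = {3,…,d} ∪ {d+3,…,n}` with `j ≠ k`,
the quantity `c_{j,d+2} + c_{d+2,2} + c_{2,1} + c_{1,d+1} + c_{d+1,k} − c'_{j',k'}`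
is at least 2 and is even. -/
theorem contractionB_cost_drop (n : ℕ) (hn : 8 ≤ n) (h4 : 4 ∣ n) (d : ℕ) (hd : d = n / 2)
    (j k : ℕ)
    (hj : (3 ≤ j ∧ j ≤ d) ∨ (d + 3 ≤ j ∧ j ≤ n))
    (hk : (3 ≤ k ∧ k ≤ d) ∨ (d + 3 ≤ k ∧ k ≤ n))
    (hjk : j ≠ k) :
    (2 : ℤ) ≤ (cost n d j (d + 2) : ℤ) + (cost n d (d + 2) 2 : ℤ) + (cost n d 2 1 : ℤ)
      + (cost n d 1 (d + 1) : ℤ) + (cost n d (d + 1) k : ℤ)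
      - (cost (n - 4) (d - 2) (relabel d j) (relabel d k) : ℤ) ∧
    Even ((cost n d j (d + 2) : ℤ) + (cost n d (d + 2) 2 : ℤ) + (cost n d 2 1 : ℤ)
      + (cost n d 1 (d + 1) : ℤ) + (cost n d (d + 1) k : ℤ)
      - (cost (n - 4) (d - 2) (relabel d j) (relabel d k) : ℤ)) := by
  have c1 := cost_cases n d j (d + 2)
  have c5 := cost_cases n d (d + 1) k
  have c6 := cost_cases (n - 4) (d - 2) (relabel d j) (relabel d k)
  have h2 : cost n d (d + 2) 2 = 0 := by
    have := cost_cases n d (d + 2) 2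
    have := ell_eq n (d + 2) 2
    omega
  have h3 : cost n d 2 1 = 1 := by
    have := cost_cases n d 2 1
    have := ell_eq n 2 1
    omega
  have h4 : cost n d 1 (d + 1) = 0 := by
    have := cost_cases n d 1 (d + 1)
    have := ell_eq n 1 (d + 1)
    omega
  rw [Int.even_iff, h2, h3, h4]
  rcases hj with ⟨hj1, hj2⟩ | ⟨hj1, hj2⟩ <;>
    rcases hk with ⟨hk1, hk2⟩ | ⟨hk1, hk2⟩
  · rw [show relabel d j = j - 2 from if_pos (by omega),
      show relabel d k = k - 2 from if_pos (by omega)] at c6 ⊢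
    have he1 : ell n j (d + 2) = d + 2 - j := by
      have := ell_eq n j (d + 2); omega
    have he5 : ell n (d + 1) k = d + 1 - k := by
      have := ell_eq n (d + 1) k; omega
    have he6 : ell (n - 4) (j - 2) (k - 2) = j - k + (k - j) := by
      have := ell_eq (n - 4) (j - 2) (k - 2); omega
    rw [he1] at c1; rw [he5] at c5; rw [he6] at c6
    constructor <;> omega
  · rw [show relabel d j = j - 2 from if_pos (by omega),
      show relabel d k = k - 4 from if_neg (by omega)] at c6 ⊢
    have he1 : ell n j (d + 2) = d + 2 - j := by
      have := ell_eq n j (d + 2); omega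
    have he5 : ell n (d + 1) k = k - d - 1 := by
      have := ell_eq n (d + 1) k; omega
    have he6 : ell (n - 4) (j - 2) (k - 4) = min (k - j - 2) (n - 2 - (k - j)) := by
      have := ell_eq (n - 4) (j - 2) (k - 4); omega
    rw [he1] at c1; rw [he5] at c5; rw [he6] at c6
    constructor <;> omega
  · rw [show relabel d j = j - 4 from if_neg (by omega),
      show relabel d k = k - 2 from if_pos (by omega)] at c6 ⊢
    have he1 : ell n j (d + 2) = j - d - 2 := by
      have := ell_eq n j (d + 2); omega
    have he5 : ell n (d + 1) k = d + 1 - k := by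
      have := ell_eq n (d + 1) k; omega
    have he6 : ell (n - 4) (j - 4) (k - 2) = min (j - k - 2) (n - 2 - (j - k)) := by
      have := ell_eq (n - 4) (j - 4) (k - 2); omega
    rw [he1] at c1; rw [he5] at c5; rw [he6] at c6
    constructor <;> omega
  · rw [show relabel d j = j - 4 from if_neg (by omega),
      show relabel d k = k - 4 from if_neg (by omega)] at c6 ⊢
    have he1 : ell n j (d + 2) = j - d - 2 := by
      have := ell_eq n j (d + 2); omega
    have he5 : ell n (d + 1) k = k - d - 1 := by
      have := ell_eq n (d + 1) k; omega
    have he6 : ell (n - 4) (j - 4) (k - 4) = j - k + (k - j) := by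
      have := ell_eq (n - 4) (j - 4) (k - 4); omega
    rw [he1] at c1; rw [he5] at c5; rw [he6] at c6
    constructor <;> omega
end

section
/- Let n ≥ 8 be divisible by 4 and d = n/2, and let j, k ∈ S = {3,…,d} ∪ {d+3,…,n} with j ≠ k. Then c_{j,d+2} + c_{d+1,k} − c'_{j',k'} is an odd integer; equivalently, c_{j,d+2} ≡ c_{d+1,k} (mod 2) if and only if c'_{j',k'} is odd. -/
lemma cost_mod_two (n d i j : ℕ) (hd2 : d % 2 = 0) (hle : ell n i j ≤ d) :
    cost n d i j % 2 = ell n i j % 2 := by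
  unfold cost
  split
  · rfl
  next h =>
    rw [Nat.odd_iff] at h
    omega

lemma ell_mod_two (n i j : ℕ) (hn : n % 2 = 0) (h : Nat.dist i j ≤ n) :
    ell n i j % 2 = (i + j) % 2 := by
  simp only [ell, Nat.dist] at h ⊢
  omega

lemma ell_le (n d i j : ℕ) (h : n = 2 * d) : ell n i j ≤ d := by
  simp only [ell, Nat.dist]
  omega

/-- Parity claim: for `j, k ∈ S = {3,…,d} ∪ {d+3,…,n}` with `j ≠ k`,
`c_{j,d+2} + c_{d+1,k} − c'_{j',k'}` is odd; equivalently,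
`c_{j,d+2} ≡ c_{d+1,k} (mod 2)` iff `c'_{j',k'}` is odd. -/
theorem contraction_parity (n : ℕ) (hn : 8 ≤ n) (h4 : 4 ∣ n) (d : ℕ) (hd : d = n / 2)
    (j k : ℕ)
    (hj : (3 ≤ j ∧ j ≤ d) ∨ (d + 3 ≤ j ∧ j ≤ n))
    (hk : (3 ≤ k ∧ k ≤ d) ∨ (d + 3 ≤ k ∧ k ≤ n))
    (hjk : j ≠ k) :
    Odd ((cost n d j (d + 2) : ℤ) + (cost n d (d + 1) k : ℤ)
      - (cost (n - 4) (d - 2) (relabel d j) (relabel d k) : ℤ)) ∧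
    (cost n d j (d + 2) % 2 = cost n d (d + 1) k % 2 ↔
      Odd (cost (n - 4) (d - 2) (relabel d j) (relabel d k))) := by
  obtain ⟨m, hm⟩ := h4
  have hnd : n = 2 * d := by omega
  have hd2 : d % 2 = 0 := by omega
  have hn4 : n - 4 = 2 * (d - 2) := by omega
  have h1 : cost n d j (d + 2) % 2 = j % 2 := by
    rw [cost_mod_two n d j (d+2) hd2 (ell_le n d _ _ hnd),
      ell_mod_two n j (d+2) (by omega) (by simp [Nat.dist]; omega)]
    omega
  have h2 : cost n d (d + 1) k % 2 = (k + 1) % 2 := by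
    rw [cost_mod_two n d (d+1) k hd2 (ell_le n d _ _ hnd),
      ell_mod_two n (d+1) k (by omega) (by simp [Nat.dist]; omega)]
    omega
  have h3 : cost (n - 4) (d - 2) (relabel d j) (relabel d k) % 2 = (j + k) % 2 := by
    rw [cost_mod_two _ _ _ _ (by omega) (ell_le _ (d - 2) _ _ hn4),
      ell_mod_two _ _ _ (by omega) (by simp [relabel, Nat.dist]; split <;> split <;> omega)]
    simp only [relabel]
    split <;> split <;> omega
  refine ⟨?_, ?_⟩
  · rw [Int.odd_iff]
    omega
  · rw [Nat.odd_iff]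
    omega
end

section
/- Let n ≥ 8 be divisible by 4 and d = n/2, let j, k ∈ S = {3,…,d} ∪ {d+3,…,n} with j ≠ k, and let H be a Hamiltonian cycle on the complete graph on vertices 1,…,n containing the five edges {j, d+2}, {d+2, 2}, {2, 1}, {1, d+1}, {d+1, k}. If c_{j,d+2} + c_{d+1,k} − c'_{j',k'} = 1, then H contains an edge {s, t} with s, t ∉ {1, 2, d+1, d+2} such that c'_{s',t'} = c_{s,t} − 2. -/
theorem ell_comm_s13 (n a b : ℕ) : ell n a b = ell n b a := by
  unfold ell; rw [Nat.dist_comm]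

theorem cost_comm (n d a b : ℕ) : cost n d a b = cost n d b a := by
  unfold cost; rw [ell_comm_s13]

theorem two_mul_ell_le (n a b : ℕ) : 2 * ell n a b ≤ n := by
  unfold ell; omega

def parityClass (d s : ℕ) : ℕ := (s + if d < s then 1 else 0) % 2

section Contraction

variable {n d a b : ℕ}

theorem ell_relabel_of_same_half (hn : n = 2 * d)
    (h : (3 ≤ a ∧ a ≤ d ∧ 3 ≤ b ∧ b ≤ d) ∨ (d + 3 ≤ a ∧ a ≤ n ∧ d + 3 ≤ b ∧ b ≤ n)) :
    ell (n - 4) (relabel d a) (relabel d b) = Nat.dist a b ∧ ell n a b = Nat.dist a b := by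
  simp only [ell, relabel, Nat.dist]
  split_ifs <;> omega

theorem ell_relabel_of_cross (hn : n = 2 * d) (ha : 3 ≤ a ∧ a ≤ d) (hb : d + 3 ≤ b ∧ b ≤ n) :
    ell (n - 4) (relabel d a) (relabel d b) + 2 = ell n a b ∧ (b - a) % 2 = ell n a b % 2 := by
  simp only [ell, relabel, Nat.dist, if_pos ha.2, if_neg (show ¬ b ≤ d by omega)]
  omega

theorem cost_of_ell_eq {n' i j i' j' : ℕ} (h : ell n' i' j' = ell n i j)
    (hℓ : ell n i j + 2 ≤ d) :
    (cost n' (d - 2) i' j' : ℤ) = cost n d i j - if ell n i j % 2 = 0 then 2 else 0 := by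
  simp only [cost, h, Nat.odd_iff]
  split_ifs <;> omega

theorem cost_of_ell_add_two_eq {n' i j i' j' : ℕ} (h : ell n' i' j' + 2 = ell n i j)
    (hℓ : ell n i j ≤ d) :
    (cost n' (d - 2) i' j' : ℤ) = cost n d i j - if ell n i j % 2 = 1 then 2 else 0 := by
  simp only [cost, Nat.odd_iff]
  split_ifs <;> omega

theorem cost_relabel (hn : n = 2 * d)
    (ha : (3 ≤ a ∧ a ≤ d) ∨ (d + 3 ≤ a ∧ a ≤ n))
    (hb : (3 ≤ b ∧ b ≤ d) ∨ (d + 3 ≤ b ∧ b ≤ n)) :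
    (cost (n - 4) (d - 2) (relabel d a) (relabel d b) : ℤ) =
      cost n d a b - if parityClass d a = parityClass d b then 2 else 0 := by
  have hℓ := two_mul_ell_le n a b
  rcases ha with ha | ha <;> rcases hb with hb | hb
  · obtain ⟨h', h⟩ := ell_relabel_of_same_half hn (Or.inl ⟨ha.1, ha.2, hb.1, hb.2⟩)
    rw [cost_of_ell_eq (h'.trans h.symm) (by simp only [Nat.dist] at h; omega)]
    simp only [parityClass, Nat.dist, if_neg (show ¬ d < a by omega),
      if_neg (show ¬ d < b by omega)] at h ⊢
    split_ifs <;> omega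
  · obtain ⟨h, hpar⟩ := ell_relabel_of_cross hn ha hb
    rw [cost_of_ell_add_two_eq h (by omega)]
    simp only [parityClass, if_neg (show ¬ d < a by omega), if_pos (show d < b by omega)]
    split_ifs <;> omega
  · obtain ⟨h, hpar⟩ := ell_relabel_of_cross hn hb ha
    have := two_mul_ell_le n b a
    rw [cost_comm (n - 4), cost_comm n, cost_of_ell_add_two_eq h (by omega)]
    simp only [parityClass, if_neg (show ¬ d < b by omega), if_pos (show d < a by omega)]
    split_ifs <;> omega
  · obtain ⟨h', h⟩ := ell_relabel_of_same_half hn (Or.inr ⟨ha.1, ha.2, hb.1, hb.2⟩)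
    rw [cost_of_ell_eq (h'.trans h.symm) (by simp only [Nat.dist] at h; omega)]
    simp only [parityClass, Nat.dist, if_pos (show d < a by omega),
      if_pos (show d < b by omega)] at h ⊢
    split_ifs <;> omega

set_option maxHeartbeats 1000000 in
theorem parityClass_eq_of_cost_relabel_eq {j k : ℕ} (hn : n = 2 * d)
    (hj : (3 ≤ j ∧ j ≤ d) ∨ (d + 3 ≤ j ∧ j ≤ n))
    (hk : (3 ≤ k ∧ k ≤ d) ∨ (d + 3 ≤ k ∧ k ≤ n))
    (heq : (cost n d j (d + 2) : ℤ) + (cost n d (d + 1) k : ℤ)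
      - (cost (n - 4) (d - 2) (relabel d j) (relabel d k) : ℤ) = 1) :
    parityClass d j = parityClass d k := by
  by_contra hc
  rw [cost_relabel hn hj hk, if_neg hc] at heq
  have hsum : cost n d j (d + 2) + cost n d (d + 1) k = cost n d j k + 1 := by omega
  clear heq
  simp only [parityClass] at hc
  rcases hj with hj | hj <;> rcases hk with hk | hk
  · obtain ⟨e1, e2, e3⟩ : ell n j (d + 2) = d + 2 - j ∧ ell n (d + 1) k = d + 1 - k ∧
        ell n j k = j - k + (k - j) := by simp only [ell, Nat.dist]; omega
    simp only [cost, e1, e2, e3, Nat.odd_iff, if_neg (show ¬ d < j by omega),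
      if_neg (show ¬ d < k by omega)] at hsum hc
    split_ifs at hsum <;> omega
  · obtain ⟨e1, e2, e3⟩ : ell n j (d + 2) = d + 2 - j ∧ ell n (d + 1) k = k - (d + 1) ∧
        ell n j k = min (k - j) (n - (k - j)) := by simp only [ell, Nat.dist]; omega
    simp only [cost, e1, e2, e3, Nat.odd_iff, if_neg (show ¬ d < j by omega),
      if_pos (show d < k by omega)] at hsum hc
    split_ifs at hsum <;> omega
  · obtain ⟨e1, e2, e3⟩ : ell n j (d + 2) = j - (d + 2) ∧ ell n (d + 1) k = d + 1 - k ∧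
        ell n j k = min (j - k) (n - (j - k)) := by simp only [ell, Nat.dist]; omega
    simp only [cost, e1, e2, e3, Nat.odd_iff, if_pos (show d < j by omega),
      if_neg (show ¬ d < k by omega)] at hsum hc
    split_ifs at hsum <;> omega
  · obtain ⟨e1, e2, e3⟩ : ell n j (d + 2) = j - (d + 2) ∧ ell n (d + 1) k = k - (d + 1) ∧
        ell n j k = j - k + (k - j) := by simp only [ell, Nat.dist]; omega
    simp only [cost, e1, e2, e3, Nat.odd_iff, if_pos (show d < j by omega),
      if_pos (show d < k by omega)] at hsum hc
    split_ifs at hsum <;> omega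

end Contraction

namespace ZMod

/-- Vertex `n` of the paper is `0 : ZMod n`; `label` recovers its label in `1, …, n`. -/
def label (n : ℕ) (x : ZMod n) : ℕ := (x - 1).val + 1

variable {n : ℕ}

theorem label_natCast {a : ℕ} (ha : a ∈ Set.Icc 1 n) : label n a = a := by
  obtain ⟨h1, h2⟩ := ha
  have : (a : ZMod n) - 1 = ((a - 1 : ℕ) : ZMod n) := by rw [Nat.cast_sub h1, Nat.cast_one]
  rw [label, this, val_natCast, Nat.mod_eq_of_lt (by omega)]
  omega

theorem natCast_injOn_Icc : Set.InjOn (Nat.cast : ℕ → ZMod n) (Set.Icc 1 n) :=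
  fun a ha b hb h => by rw [← label_natCast ha, ← label_natCast hb, h]

theorem natCast_ne_natCast {a b : ℕ} (h : 1 ≤ a ∧ a ≤ n ∧ 1 ≤ b ∧ b ≤ n ∧ a ≠ b) :
    (a : ZMod n) ≠ b :=
  natCast_injOn_Icc.ne ⟨h.1, h.2.1⟩ ⟨h.2.2.1, h.2.2.2.1⟩ h.2.2.2.2

variable [NeZero n]

theorem label_mem_Icc (x : ZMod n) : label n x ∈ Set.Icc 1 n :=
  ⟨Nat.le_add_left 1 _, (x - 1).val_lt⟩

@[simp]
theorem natCast_label (x : ZMod n) : (label n x : ZMod n) = x := by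
  simp [label]

end ZMod

namespace SimpleGraph.Walk

variable {V : Type*} {G : SimpleGraph V}

theorem IsCycle.eq_or_eq_of_mem_edges {u x a b y : V} {p : G.Walk u u} (hp : p.IsCycle)
    (ha : s(x, a) ∈ p.edges) (hb : s(x, b) ∈ p.edges) (hab : a ≠ b) (hy : s(x, y) ∈ p.edges) :
    y = a ∨ y = b := by
  have mem_nbr : ∀ {z}, s(x, z) ∈ p.edges → z ∈ p.toSubgraph.neighborSet x := fun hz =>
    Subgraph.mem_edgeSet.mp ((p.mem_edges_toSubgraph).mpr hz)
  have hcard := hp.ncard_neighborSet_toSubgraph_eq_two (p.fst_mem_support_of_mem_edges ha)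
  have hpair : ({a, b} : Set V) = p.toSubgraph.neighborSet x :=
    Set.eq_of_subset_of_ncard_le (Set.pair_subset (mem_nbr ha) (mem_nbr hb))
      (by rw [hcard, Set.ncard_pair hab]) (Set.finite_of_ncard_pos (by omega))
  simpa [← hpair] using mem_nbr hy

theorem IsCycle.mem_of_mem_of_mem_of_ne {u x a b y : V} {p : G.Walk u u} (hp : p.IsCycle)
    {E : List (Sym2 V)} (hE : E ⊆ p.edges) (ha : s(x, a) ∈ E) (hb : s(x, b) ∈ E) (hab : a ≠ b)
    (hy : s(x, y) ∈ p.edges) : s(x, y) ∈ E := by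
  rcases hp.eq_or_eq_of_mem_edges (hE ha) (hE hb) hab hy with rfl | rfl <;> assumption

variable (f : V → ZMod 2) {g : Sym2 V → ZMod 2}

theorem sum_map_edges_of_eq_add (hg : ∀ x y, g s(x, y) = f x + f y) {u v : V} (p : G.Walk u v) :
    (p.edges.map g).sum = f u + f v := by
  induction p with
  | nil => simp [CharTwo.add_self_eq_zero]
  | @cons _ b _ _ p ih =>
    simp only [edges_cons, List.map_cons, List.sum_cons, ih, hg]
    linear_combination CharTwo.add_self_eq_zero (f b)

/-- The sum of `f x + f y` over the edges telescopes, to `0` over `w` and to `f u + f v = 0` over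
`q`; were every other edge bichromatic, those odd-many edges would contribute `1`. -/
theorem exists_mem_edges_notMem_edges_eq [DecidableEq V] {w₀ u v : V} {w : G.Walk w₀ w₀}
    {q : G.Walk u v} (hw : w.IsTrail) (hq : q.IsTrail) (hqw : q.edges ⊆ w.edges)
    (hodd : Odd (w.length + q.length)) (huv : f u = f v) :
    ∃ x y, s(x, y) ∈ w.edges ∧ s(x, y) ∉ q.edges ∧ f x = f y := by
  by_contra! h
  let g : Sym2 V → ZMod 2 := Sym2.lift ⟨fun x y => f x + f y, fun _ _ => add_comm _ _⟩
  have hg : ∀ x y, g s(x, y) = f x + f y := fun _ _ => rfl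
  have hsub : q.edges.toFinset ⊆ w.edges.toFinset := fun e he => by
    simpa using hqw (List.mem_toFinset.mp he)
  have hrest : ∀ e ∈ w.edges.toFinset \ q.edges.toFinset, g e = 1 := by
    intro e he
    induction e using Sym2.ind with
    | _ x y =>
      simp only [Finset.mem_sdiff, List.mem_toFinset] at he
      rw [hg]
      have hxy := h x y he.1 he.2
      generalize f x = a, f y = b at hxy
      revert a b; decide
  have hcard : (w.edges.toFinset \ q.edges.toFinset).card + q.length = w.length := by
    rw [← length_edges, ← length_edges, ← List.toFinset_card_of_nodup hw.edges_nodup,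
      ← List.toFinset_card_of_nodup hq.edges_nodup]
    exact Finset.card_sdiff_add_card_eq_card hsub
  have hsum := Finset.sum_sdiff hsub (f := g)
  rw [Finset.sum_congr rfl hrest, List.sum_toFinset _ hq.edges_nodup,
    List.sum_toFinset _ hw.edges_nodup, sum_map_edges_of_eq_add f hg,
    sum_map_edges_of_eq_add f hg, huv, CharTwo.add_self_eq_zero, CharTwo.add_self_eq_zero,
    add_zero, Finset.sum_const, nsmul_one, ZMod.natCast_eq_zero_iff_even] at hsum
  rw [← hcard] at hodd
  obtain ⟨a, ha⟩ := hsum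
  obtain ⟨b, hb⟩ := hodd
  omega

end SimpleGraph.Walk

section ContractedPath

open SimpleGraph

variable {n d j k : ℕ}

def contractedEdges (n d j k : ℕ) : List (Sym2 (ZMod n)) :=
  [s(j, ↑(d + 2)), s(↑(d + 2), 2), s(2, 1), s(1, ↑(d + 1)), s(↑(d + 1), k)]

theorem exists_isPath_edges_eq_contractedEdges (hn : n = 2 * d)
    (hj : (3 ≤ j ∧ j ≤ d) ∨ (d + 3 ≤ j ∧ j ≤ n))
    (hk : (3 ≤ k ∧ k ≤ d) ∨ (d + 3 ≤ k ∧ k ≤ n)) (hjk : j ≠ k) :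
    ∃ q : (⊤ : SimpleGraph (ZMod n)).Walk j k, q.IsPath ∧ q.edges = contractedEdges n d j k := by
  let q : (⊤ : SimpleGraph (ZMod n)).Walk j k :=
    .cons (ZMod.natCast_ne_natCast (a := j) (b := d + 2) (by omega))
      (.cons (by exact_mod_cast ZMod.natCast_ne_natCast (a := d + 2) (b := 2) (by omega))
        (.cons (by exact_mod_cast ZMod.natCast_ne_natCast (a := 2) (b := 1) (by omega))
          (.cons (by exact_mod_cast ZMod.natCast_ne_natCast (a := 1) (b := d + 1) (by omega))
            (.cons (ZMod.natCast_ne_natCast (a := d + 1) (b := k) (by omega)) .nil))))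
  refine ⟨q, ?_, rfl⟩
  have : q.support = [j, d + 2, 2, 1, d + 1, k].map (Nat.cast : ℕ → ZMod n) := by simp [q]
  rw [Walk.isPath_def, this]
  refine List.Nodup.map_on (fun x hx y hy => ZMod.natCast_injOn_Icc ?_ ?_) ?_ <;>
    simp at * <;> omega

/-- Each of `1, 2, d + 1, d + 2` has both of its cycle edges among the contracted ones. -/
theorem label_notMem_of_mem_edges_of_notMem_contractedEdges [NeZero n] (hn : n = 2 * d)
    (hj : (3 ≤ j ∧ j ≤ d) ∨ (d + 3 ≤ j ∧ j ≤ n))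
    (hk : (3 ≤ k ∧ k ≤ d) ∨ (d + 3 ≤ k ∧ k ≤ n)) {v x y : ZMod n}
    {w : (⊤ : SimpleGraph (ZMod n)).Walk v v} (hw : w.IsCycle)
    (hE : contractedEdges n d j k ⊆ w.edges) (hxy : s(x, y) ∈ w.edges)
    (hxyE : s(x, y) ∉ contractedEdges n d j k) :
    ZMod.label n x ∉ ({1, 2, d + 1, d + 2} : Set ℕ) := by
  intro hx
  rw [← ZMod.natCast_label x] at hxy hxyE
  simp only [Set.mem_insert_iff, Set.mem_singleton_iff] at hx
  rcases hx with h | h | h | h <;> rw [h] at hxy hxyE <;> apply hxyE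
  · refine hw.mem_of_mem_of_mem_of_ne hE (a := 2) (b := ↑(d + 1)) (by simp [contractedEdges])
      (by simp [contractedEdges]) ?_ hxy
    exact_mod_cast ZMod.natCast_ne_natCast (a := 2) (b := d + 1) (by omega)
  · refine hw.mem_of_mem_of_mem_of_ne hE (a := ↑(d + 2)) (b := 1) (by simp [contractedEdges])
      (by simp [contractedEdges]) ?_ hxy
    exact_mod_cast ZMod.natCast_ne_natCast (a := d + 2) (b := 1) (by omega)
  · refine hw.mem_of_mem_of_mem_of_ne hE (a := (1 : ZMod n)) (b := k) (by simp [contractedEdges])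
      (by simp [contractedEdges]) ?_ hxy
    exact_mod_cast ZMod.natCast_ne_natCast (a := 1) (b := k) (by omega)
  · refine hw.mem_of_mem_of_mem_of_ne hE (a := (j : ZMod n)) (b := 2) (by simp [contractedEdges])
      (by simp [contractedEdges]) ?_ hxy
    exact_mod_cast ZMod.natCast_ne_natCast (a := j) (b := 2) (by omega)

end ContractedPath

theorem contraction_equality_needs_cheaper_edge_general
    (n : ℕ) (h4 : 4 ∣ n) (d : ℕ) (hd : d = n / 2)
    (j k : ℕ)
    (hj : (3 ≤ j ∧ j ≤ d) ∨ (d + 3 ≤ j ∧ j ≤ n))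
    (hk : (3 ≤ k ∧ k ≤ d) ∨ (d + 3 ≤ k ∧ k ≤ n))
    (hjk : j ≠ k)
    (v : ZMod n) (w : (⊤ : SimpleGraph (ZMod n)).Walk v v)
    (hw : w.IsHamiltonianCycle)
    (he1 : s((j : ZMod n), ((d + 2 : ℕ) : ZMod n)) ∈ w.edges)
    (he2 : s(((d + 2 : ℕ) : ZMod n), (2 : ZMod n)) ∈ w.edges)
    (he3 : s((2 : ZMod n), (1 : ZMod n)) ∈ w.edges)
    (he4 : s((1 : ZMod n), ((d + 1 : ℕ) : ZMod n)) ∈ w.edges)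
    (he5 : s(((d + 1 : ℕ) : ZMod n), (k : ZMod n)) ∈ w.edges)
    (heq : (cost n d j (d + 2) : ℤ) + (cost n d (d + 1) k : ℤ)
      - (cost (n - 4) (d - 2) (relabel d j) (relabel d k) : ℤ) = 1) :
    ∃ a b : ℕ, 1 ≤ a ∧ a ≤ n ∧ 1 ≤ b ∧ b ≤ n ∧
      a ∉ ({1, 2, d + 1, d + 2} : Set ℕ) ∧ b ∉ ({1, 2, d + 1, d + 2} : Set ℕ) ∧
      s((a : ZMod n), (b : ZMod n)) ∈ w.edges ∧
      (cost (n - 4) (d - 2) (relabel d a) (relabel d b) : ℤ) = (cost n d a b : ℤ) - 2 := by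
  have : NeZero n := ⟨by omega⟩
  have hnd : n = 2 * d := by omega
  obtain ⟨q, hq, hqE⟩ := exists_isPath_edges_eq_contractedEdges hnd hj hk hjk
  have hE : contractedEdges n d j k ⊆ w.edges := by
    intro e he
    simp only [contractedEdges, List.mem_cons, List.not_mem_nil, or_false] at he
    rcases he with rfl | rfl | rfl | rfl | rfl <;> assumption
  have hodd : Odd (w.length + q.length) := by
    rw [hw.length_eq, ZMod.card, ← SimpleGraph.Walk.length_edges, hqE]
    exact ⟨n / 2 + 2, by simp [contractedEdges]; omega⟩
  let f : ZMod n → ZMod 2 := fun x => (parityClass d (ZMod.label n x) : ZMod 2)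
  have hf : f j = f k := by
    simp only [f, ZMod.label_natCast (show j ∈ Set.Icc 1 n by simp; omega),
      ZMod.label_natCast (show k ∈ Set.Icc 1 n by simp; omega),
      parityClass_eq_of_cost_relabel_eq hnd hj hk heq]
  obtain ⟨x, y, hxy, hxyq, hfxy⟩ := SimpleGraph.Walk.exists_mem_edges_notMem_edges_eq f
    hw.isCycle.isTrail hq.isTrail (hqE ▸ hE) hodd hf
  rw [hqE] at hxyq
  have hx := label_notMem_of_mem_edges_of_notMem_contractedEdges hnd hj hk hw.isCycle hE hxy hxyq
  have hy := label_notMem_of_mem_edges_of_notMem_contractedEdges hnd hj hk hw.isCycle hE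
    (Sym2.eq_swap ▸ hxy) (Sym2.eq_swap ▸ hxyq)
  obtain ⟨hx1, hxn⟩ := ZMod.label_mem_Icc x
  obtain ⟨hy1, hyn⟩ := ZMod.label_mem_Icc y
  refine ⟨ZMod.label n x, ZMod.label n y, hx1, hxn, hy1, hyn, hx, hy, by simpa using hxy, ?_⟩
  have hclass : parityClass d (ZMod.label n x) = parityClass d (ZMod.label n y) := by
    simpa [parityClass] using (ZMod.natCast_eq_natCast_iff' _ _ 2).mp hfxy
  simp only [Set.mem_insert_iff, Set.mem_singleton_iff] at hx hy
  rw [cost_relabel hnd (by omega) (by omega), if_pos hclass]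

/-- If a Hamiltonian cycle (on vertices `1,…,n`, realized as `ZMod n`) contains the five
edges `{j,d+2}, {d+2,2}, {2,1}, {1,d+1}, {d+1,k}` and
`c_{j,d+2} + c_{d+1,k} − c'_{j',k'} = 1`, then the cycle contains an edge `{a,b}` with
`a, b ∉ {1, 2, d+1, d+2}` such that `c'_{a',b'} = c_{a,b} − 2`. -/
theorem contraction_equality_needs_cheaper_edge
    (n : ℕ) (hn : 8 ≤ n) (h4 : 4 ∣ n) (d : ℕ) (hd : d = n / 2)
    (j k : ℕ)
    (hj : (3 ≤ j ∧ j ≤ d) ∨ (d + 3 ≤ j ∧ j ≤ n))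
    (hk : (3 ≤ k ∧ k ≤ d) ∨ (d + 3 ≤ k ∧ k ≤ n))
    (hjk : j ≠ k)
    (v : ZMod n) (w : (⊤ : SimpleGraph (ZMod n)).Walk v v)
    (hw : w.IsHamiltonianCycle)
    (he1 : s((j : ZMod n), ((d + 2 : ℕ) : ZMod n)) ∈ w.edges)
    (he2 : s(((d + 2 : ℕ) : ZMod n), (2 : ZMod n)) ∈ w.edges)
    (he3 : s((2 : ZMod n), (1 : ZMod n)) ∈ w.edges)
    (he4 : s((1 : ZMod n), ((d + 1 : ℕ) : ZMod n)) ∈ w.edges)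
    (he5 : s(((d + 1 : ℕ) : ZMod n), (k : ZMod n)) ∈ w.edges)
    (heq : (cost n d j (d + 2) : ℤ) + (cost n d (d + 1) k : ℤ)
      - (cost (n - 4) (d - 2) (relabel d j) (relabel d k) : ℤ) = 1) :
    ∃ a b : ℕ, 1 ≤ a ∧ a ≤ n ∧ 1 ≤ b ∧ b ≤ n ∧
      a ∉ ({1, 2, d + 1, d + 2} : Set ℕ) ∧ b ∉ ({1, 2, d + 1, d + 2} : Set ℕ) ∧
      s((a : ZMod n), (b : ZMod n)) ∈ w.edges ∧
      (cost (n - 4) (d - 2) (relabel d a) (relabel d b) : ℤ) = (cost n d a b : ℤ) - 2 :=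
  contraction_equality_needs_cheaper_edge_general n h4 d hd j k hj hk hjk v w hw he1 he2 he3 he4 he5
    heq
end

section
/- Let n ≥ 4 be divisible by 4 and d = n/2. Then the minimum of the circlet cost Σ_{e ∈ H} c_{ℓ(e)} over all Hamiltonian cycles H on the complete graph with vertex set ZMod n equals exactly n − 2. In particular, there exists a Hamiltonian cycle using two edges of length d and n − 2 edges of length 1 whose circlet cost is n − 2. -/
/-!
Lift each step `s = b - a` of a cycle to an integer `r(s)`: for odd `s` the representative of
`s` of least absolute value, for even `s` the integer `s - d`. Then `|r(s)|` is the circlet cost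
of the edge `{a, b}` and `r(s) ≡ (d + 1) s + d (mod n)`, so the `n` lifted steps of a Hamiltonian
cycle sum to a multiple of `n`. If that sum is nonzero, the cost is at least `n`. If it is zero,
the partial sums form a closed integer walk. The partial sum on reaching vertex `x` is
`≡ x - x₀ (mod d)`, where `x₀` is the starting vertex, so the walk meets all residues mod `d`,
its range is at least `d - 1`, and its total variation, which is the cost, is at least
`2 (d - 1) = n - 2`.

The bound is attained by the cycle `0, 1, …, d - 1, n - 1, n - 2, …, d`: its two edges of
length `d` cost `d - d = 0` (as `d` is even) and its other `n - 2` edges have length `1`.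
-/

open SimpleGraph Finset Function

lemma List.natAbs_sum_le_sum_natAbs (l : List ℤ) : l.sum.natAbs ≤ (l.map Int.natAbs).sum := by
  induction l with
  | nil => simp
  | cons a l ih =>
    simp only [List.sum_cons, List.map_cons]
    exact (Int.natAbs_add_le _ _).trans (by omega)

lemma List.two_mul_natAbs_sub_le_of_sum_eq_zero {l p q : List ℤ} (hl : l.sum = 0)
    (hp : p <+: l) (hq : q <+: l) : 2 * (p.sum - q.sum).natAbs ≤ (l.map Int.natAbs).sum := by
  wlog hqp : q <+: p generalizing p q
  · rw [← Int.natAbs_neg, neg_sub]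
    exact this hq hp ((List.prefix_or_prefix_of_prefix hp hq).resolve_right hqp)
  obtain ⟨m, rfl⟩ := hqp
  obtain ⟨r, rfl⟩ := hp
  simp only [List.sum_append, List.map_append] at hl ⊢
  have := q.natAbs_sum_le_sum_natAbs
  have := m.natAbs_sum_le_sum_natAbs
  have := r.natAbs_sum_le_sum_natAbs
  omega

lemma exists_le_sub_of_surjective_intCast {α : Type*} [Fintype α] {m : ℕ} [NeZero m]
    (f : α → ℤ) (hf : Surjective fun x => (f x : ZMod m)) :
    ∃ x y, (m : ℤ) - 1 ≤ f x - f y := by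
  obtain ⟨z, -⟩ := hf 0
  obtain ⟨x, -, hx⟩ := exists_max_image univ f ⟨z, mem_univ z⟩
  obtain ⟨y, -, hy⟩ := exists_min_image univ f ⟨z, mem_univ z⟩
  refine ⟨x, y, ?_⟩
  have hcover : (univ : Finset (ZMod m)) ⊆ (Icc (f y) (f x)).image (↑) := fun t _ => by
    obtain ⟨w, rfl⟩ := hf t
    exact mem_image_of_mem _ (mem_Icc.2 ⟨hy w (mem_univ w), hx w (mem_univ w)⟩)
  have := (card_le_card hcover).trans card_image_le
  rw [card_univ, ZMod.card, Int.card_Icc] at this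
  have := NeZero.pos m
  omega

lemma ZMod.injective_sym2_mk_add_one {V : Type*} {N : ℕ} (hN : 3 ≤ N) {ρ : ZMod N → V}
    (hρ : Injective ρ) : Injective fun j => s(ρ j, ρ (j + 1)) := by
  intro i j h
  rcases Sym2.eq_iff.1 h with ⟨h, -⟩ | ⟨h₁, h₂⟩
  · exact hρ h
  · have h2 : ((2 : ℕ) : ZMod N) = 0 := by
      push_cast
      linear_combination hρ h₂ - hρ h₁
    exact absurd (Nat.le_of_dvd two_pos ((ZMod.natCast_eq_zero_iff 2 N).1 h2)) (by omega)

lemma SimpleGraph.cycleGraph.toFinset_edges_cycle (m : ℕ) :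
    (cycleGraph.cycle m).edges.toFinset = univ.image fun j : Fin (m + 3) => s(j, j + 1) := by
  refine eq_of_subset_of_card_le (fun e he => ?_) ?_
  · have hadj := (cycleGraph.cycle m).edges_subset_edgeSet (List.mem_toFinset.1 he)
    induction e using Sym2.ind with
    | _ x y =>
    rw [mem_edgeSet, cycleGraph_adj', ← Fin.val_one, ← Fin.ext_iff, ← Fin.ext_iff] at hadj
    simp only [mem_image, mem_univ, true_and]
    rcases hadj with h | h
    · exact ⟨y, by rw [Sym2.eq_swap, ← h, add_sub_cancel]⟩
    · exact ⟨x, by rw [← h, add_sub_cancel]⟩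
  · rw [List.toFinset_card_of_nodup cycleGraph.isCycle_cycle.edges_nodup, Walk.length_edges,
      cycleGraph.length_cycle]
    exact card_image_le.trans (by simp)

theorem exists_isHamiltonianCycle_top_toFinset_edges {V : Type*} [DecidableEq V] {N : ℕ}
    [NeZero N] (hN : 3 ≤ N) {ρ : ZMod N → V} (hρ : Bijective ρ) :
    ∃ (v : V) (w : (⊤ : SimpleGraph V).Walk v v), w.IsHamiltonianCycle ∧
      w.edges.toFinset = univ.image fun j => s(ρ j, ρ (j + 1)) := by
  obtain ⟨m, rfl⟩ : ∃ m, N = m + 3 := ⟨N - 3, by omega⟩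
  let f : cycleGraph (m + 3) →g (⊤ : SimpleGraph V) := ⟨ρ, fun h => hρ.injective.ne h.ne⟩
  have hc : (cycleGraph.cycle m).IsHamiltonianCycle :=
    Walk.isHamiltonianCycle_iff_isCycle_and_length_eq.2 ⟨cycleGraph.isCycle_cycle, by simp⟩
  refine ⟨f 0, (cycleGraph.cycle m).map f, hc.map hρ, ?_⟩
  rw [Walk.edges_map]
  refine (Multiset.toFinset_map (Sym2.map f) (cycleGraph.cycle m).edges).trans ?_
  change image _ (cycleGraph.cycle m).edges.toFinset = _
  rw [cycleGraph.toFinset_edges_cycle, image_image]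
  rfl

namespace Circlet

variable {n : ℕ}

lemma zLenSym_mk_eq_min [NeZero n] (a b : ZMod n) :
    zLenSym s(a, b) = min (b - a).val (n - (b - a).val) := by
  change min (a - b).val (b - a).val = _
  rw [← neg_sub b a, ZMod.neg_val]
  split_ifs with h
  · simp [h]
  · exact min_comm _ _

lemma zLenSym_natCast {a b : ℕ} (ha : a < n) (hb : b < n) :
    zLenSym s((a : ZMod n), (b : ZMod n)) = min (Nat.dist a b) (n - Nat.dist a b) := by
  wlog hba : b ≤ a generalizing a b
  · rw [Sym2.eq_swap, this hb ha (by omega), Nat.dist_comm]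
  have : NeZero n := ⟨by omega⟩
  rw [Sym2.eq_swap, zLenSym_mk_eq_min, ← Nat.cast_sub hba, ZMod.val_cast_of_lt (by omega)]
  unfold Nat.dist
  omega

def signedCost (n : ℕ) (s : ZMod n) : ℤ :=
  if Odd s.val then (if s.val < n / 2 then s.val else (s.val : ℤ) - n)
  else (s.val : ℤ) - (n / 2 : ℕ)

lemma circCost_mk_eq_natAbs_signedCost (h2 : 2 ∣ n) [NeZero n] (a b : ZMod n) :
    circCost (n / 2) s(a, b) = (signedCost n (b - a)).natAbs := by
  have := (b - a).val_lt
  simp only [circCost, signedCost, zLenSym_mk_eq_min, Nat.odd_iff]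
  split_ifs <;> omega

lemma signedCost_cast (h2 : 2 ∣ n) [NeZero n] (s : ZMod n) :
    (signedCost n s : ZMod n) = ((n / 2 + 1 : ℕ) : ZMod n) * s + (n / 2 : ℕ) := by
  have hD : ((n / 2 * 2 : ℕ) : ZMod n) = 0 := by
    rw [Nat.div_mul_cancel h2, ZMod.natCast_self]
  have hn : (n : ZMod n) = 0 := ZMod.natCast_self n
  push_cast at hD
  unfold signedCost
  conv_rhs => rw [← ZMod.natCast_zmod_val s]
  generalize s.val = k
  rcases Nat.even_or_odd' k with ⟨t, rfl | rfl⟩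
  · rw [if_neg (by rw [Nat.odd_iff]; omega)]
    simp only [Int.cast_sub, Int.cast_natCast]
    push_cast
    linear_combination (-(t : ZMod n) - 1) * hD
  · rw [if_pos (by rw [Nat.odd_iff]; omega)]
    split_ifs
    · push_cast
      linear_combination (-(t : ZMod n) - 1) * hD
    · push_cast
      linear_combination (-(t : ZMod n) - 1) * hD - hn

section Walks

variable {G : SimpleGraph (ZMod n)}

def signedStep (e : G.Dart) : ℤ :=
  signedCost n (e.snd - e.fst)

lemma sum_circCost_edges_eq (h2 : 2 ∣ n) [NeZero n] {u v : ZMod n} {p : G.Walk u v}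
    (hp : p.IsTrail) :
    ∑ e ∈ p.edges.toFinset, circCost (n / 2) e =
      (p.darts.map (Int.natAbs ∘ signedStep)).sum := by
  rw [List.sum_toFinset _ hp.edges_nodup, Walk.edges, List.map_map]
  exact congrArg List.sum <| List.map_congr_left fun e _ =>
    circCost_mk_eq_natAbs_signedCost h2 e.fst e.snd

lemma sum_signedStep_cast (h2 : 2 ∣ n) [NeZero n] {u v : ZMod n} (p : G.Walk u v) :
    ((p.darts.map signedStep).sum : ZMod n) =
      ((n / 2 + 1 : ℕ) : ZMod n) * (v - u) + (n / 2 : ℕ) * p.length := by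
  induction p with
  | nil => simp
  | cons h p ih =>
    rw [Walk.darts_cons, List.map_cons, List.sum_cons, Int.cast_add, ih, Walk.length_cons,
      signedStep, signedCost_cast h2]
    push_cast
    ring

lemma sum_signedStep_cast_half (h2 : 2 ∣ n) [NeZero n] {u v : ZMod n} (p : G.Walk u v) :
    ((p.darts.map signedStep).sum : ZMod (n / 2)) =
      ZMod.castHom (Nat.div_dvd_of_dvd h2) _ (v - u) := by
  have h := congrArg (ZMod.castHom (Nat.div_dvd_of_dvd h2) (ZMod (n / 2)))
    (sum_signedStep_cast h2 p)
  simpa only [map_intCast, map_add, map_mul, map_natCast, Nat.cast_add, Nat.cast_one,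
    ZMod.natCast_self, zero_add, map_one, one_mul, zero_mul, add_zero] using h

theorem sub_two_le_sum_circCost (h2 : 2 ∣ n) [NeZero n] {v : ZMod n} {w : G.Walk v v}
    (hw : w.IsHamiltonianCycle) : n - 2 ≤ ∑ e ∈ w.edges.toFinset, circCost (n / 2) e := by
  have : NeZero (n / 2) := ⟨by have := NeZero.pos n; omega⟩
  rw [sum_circCost_edges_eq h2 hw.isCycle.isTrail, ← List.map_map]
  set L := w.darts.map signedStep
  have hdvd : (n : ℤ) ∣ L.sum := by
    rw [← ZMod.intCast_zmod_eq_zero_iff_dvd, sum_signedStep_cast h2, hw.length_eq, ZMod.card]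
    simp
  rcases eq_or_ne L.sum 0 with hL | hL
  · let T x := ((w.takeUntil x (hw.mem_support x)).darts.map signedStep).sum
    have hT : Surjective fun x => (T x : ZMod (n / 2)) := by
      simp only [T, sum_signedStep_cast_half h2]
      exact (ZMod.ringHom_surjective _).comp (Equiv.subRight v).surjective
    obtain ⟨x, y, hxy⟩ := exists_le_sub_of_surjective_intCast T hT
    simp only [T] at hxy
    have := List.two_mul_natAbs_sub_le_of_sum_eq_zero hL
      ((w.darts_takeUntil_prefix_darts (hw.mem_support x)).map signedStep)
      ((w.darts_takeUntil_prefix_darts (hw.mem_support y)).map signedStep)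
    omega
  · have := L.natAbs_sum_le_sum_natAbs
    have := Nat.le_of_dvd (Int.natAbs_pos.2 hL) (Int.natAbs_dvd_natAbs.2 hdvd)
    omega

end Walks

def foldOrder (n : ℕ) (j : ZMod n) : ZMod n :=
  ((if j.val < n / 2 then j.val else n + n / 2 - 1 - j.val : ℕ) : ZMod n)

lemma val_foldOrder [NeZero n] (j : ZMod n) :
    (foldOrder n j).val = if j.val < n / 2 then j.val else n + n / 2 - 1 - j.val :=
  ZMod.val_cast_of_lt (by have := j.val_lt; split_ifs <;> omega)

lemma foldOrder_involutive [NeZero n] : Involutive (foldOrder n) := fun j => by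
  apply ZMod.val_injective n
  have := j.val_lt
  rw [val_foldOrder, val_foldOrder]
  split_ifs <;> omega

lemma zLenSym_foldOrder (h2 : 2 ∣ n) [NeZero n] (j : ZMod n) :
    zLenSym s(foldOrder n j, foldOrder n (j + 1)) =
      if j.val + 1 = n / 2 ∨ j.val + 1 = n then n / 2 else 1 := by
  have hj := j.val_lt
  have hsucc : (j + 1).val = if j.val + 1 = n then 0 else j.val + 1 := by
    rw [← ZMod.natCast_zmod_val j, ← Nat.cast_add_one, ZMod.val_natCast, ZMod.val_natCast,
      Nat.mod_eq_of_lt hj]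
    split_ifs with h
    · rw [h, Nat.mod_self]
    · exact Nat.mod_eq_of_lt (by omega)
  unfold foldOrder
  rw [zLenSym_natCast (by split_ifs <;> omega) (by split_ifs <;> omega), hsucc]
  unfold Nat.dist
  split_ifs <;> omega

lemma circCost_foldOrder (h4 : 4 ∣ n) [NeZero n] (j : ZMod n) :
    circCost (n / 2) s(foldOrder n j, foldOrder n (j + 1)) =
      if j.val + 1 = n / 2 ∨ j.val + 1 = n then 0 else 1 := by
  simp only [circCost, zLenSym_foldOrder (dvd_trans ⟨2, rfl⟩ h4), Nat.odd_iff]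
  split_ifs <;> omega

lemma card_filter_val_add_one_eq (hn : 4 ≤ n) [NeZero n] :
    #{j : ZMod n | j.val + 1 = n / 2 ∨ j.val + 1 = n} = 2 := by
  have h₁ : (((n / 2 - 1 : ℕ) : ZMod n)).val = n / 2 - 1 := ZMod.val_cast_of_lt (by omega)
  have h₂ : (((n - 1 : ℕ) : ZMod n)).val = n - 1 := ZMod.val_cast_of_lt (by omega)
  have : ({j : ZMod n | j.val + 1 = n / 2 ∨ j.val + 1 = n} : Finset (ZMod n)) =
      {((n / 2 - 1 : ℕ) : ZMod n), ((n - 1 : ℕ) : ZMod n)} := by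
    ext j
    simp only [mem_filter, mem_univ, true_and, mem_insert, mem_singleton,
      ← (ZMod.val_injective n).eq_iff, h₁, h₂]
    omega
  rw [this, card_pair]
  intro h
  have := congrArg ZMod.val h
  rw [h₁, h₂] at this
  omega

theorem exists_isHamiltonianCycle_sum_circCost_eq (hn : 4 ≤ n) (h4 : 4 ∣ n) :
    ∃ (v : ZMod n) (w : (⊤ : SimpleGraph (ZMod n)).Walk v v),
      w.IsHamiltonianCycle ∧
      (w.edges.toFinset.filter (fun e => zLenSym e = n / 2)).card = 2 ∧
      (w.edges.toFinset.filter (fun e => zLenSym e = 1)).card = n - 2 ∧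
      ∑ e ∈ w.edges.toFinset, circCost (n / 2) e = n - 2 := by
  have : NeZero n := ⟨by omega⟩
  have h2 : 2 ∣ n := dvd_trans ⟨2, rfl⟩ h4
  have hfold : Involutive (foldOrder n) := foldOrder_involutive
  obtain ⟨v, w, hw, hedges⟩ :=
    exists_isHamiltonianCycle_top_toFinset_edges (by omega) hfold.bijective
  have hinj := ZMod.injective_sym2_mk_add_one (by omega) hfold.injective
  set P : ZMod n → Prop := fun j => j.val + 1 = n / 2 ∨ j.val + 1 = n
  have hP : #{j | P j} = 2 := card_filter_val_add_one_eq hn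
  have hnP : #{j | ¬P j} = n - 2 := by
    have := card_filter_add_card_filter_not (s := univ) P
    rw [card_univ, ZMod.card, hP] at this
    omega
  refine ⟨v, w, hw, ?_, ?_, ?_⟩ <;> rw [hedges]
  · rw [filter_image, card_image_of_injective _ hinj]
    refine (congrArg card (filter_congr fun j _ => ?_)).trans hP
    simp only [zLenSym_foldOrder h2]
    split_ifs <;> omega
  · rw [filter_image, card_image_of_injective _ hinj]
    refine (congrArg card (filter_congr fun j _ => ?_)).trans hnP
    simp only [zLenSym_foldOrder h2]
    split_ifs <;> omega
  · rw [sum_image fun i _ j _ h => hinj h, ← hnP, card_filter]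
    exact sum_congr rfl fun j _ => by rw [circCost_foldOrder h4]; split_ifs <;> simp_all

end Circlet

/-- The minimum circlet cost over Hamiltonian cycles on `ZMod n` (with `n ≥ 4`, `4 ∣ n`,
`d = n/2`) equals `n − 2`: every Hamiltonian cycle costs at least `n − 2`, and there is a
Hamiltonian cycle using two edges of length `d` and `n − 2` edges of length `1` of circlet
cost exactly `n − 2`. -/
theorem circlet_min_value (n : ℕ) (hn : 4 ≤ n) (h4 : 4 ∣ n) :
    (∀ (v : ZMod n) (w : (⊤ : SimpleGraph (ZMod n)).Walk v v),
      w.IsHamiltonianCycle →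
        n - 2 ≤ ∑ e ∈ w.edges.toFinset, circCost (n / 2) e) ∧
    (∃ (v : ZMod n) (w : (⊤ : SimpleGraph (ZMod n)).Walk v v),
      w.IsHamiltonianCycle ∧
      (w.edges.toFinset.filter (fun e => zLenSym e = n / 2)).card = 2 ∧
      (w.edges.toFinset.filter (fun e => zLenSym e = 1)).card = n - 2 ∧
      ∑ e ∈ w.edges.toFinset, circCost (n / 2) e = n - 2) := by
  have : NeZero n := ⟨by omega⟩
  exact ⟨fun _ _ hw => Circlet.sub_two_le_sum_circCost (dvd_trans ⟨2, rfl⟩ h4) hw,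
    Circlet.exists_isHamiltonianCycle_sum_circCost_eq hn h4⟩
end

section
/- Let n ≥ 8 be divisible by 4 and d = n/2. For all pairwise distinct vertices i, j, k of the complete graph on ZMod n, the tight-triangular-form circlet coefficients satisfy the triangle inequality f_{i,j} + f_{j,k} ≥ f_{i,k}. -/
/-- The length of an edge between vertices `i, j` of `ZMod n`:
`ℓ(i,j) = min(|i−j|, n−|i−j|)`, expressed as `min (i-j).val (j-i).val`. -/
def zLen {n : ℕ} (i j : ZMod n) : ℕ := min (i - j).val (j - i).val

/-- Tight-triangular-form circlet coefficient: `f_{i,j} = (d−2) + ℓ(i,j)` if `ℓ(i,j)` is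
odd, and `f_{i,j} = (d−2) + (d − ℓ(i,j))` if `ℓ(i,j)` is even. -/
def fco {n : ℕ} (d : ℕ) (i j : ZMod n) : ℕ :=
  if Odd (zLen i j) then d - 2 + zLen i j else d - 2 + (d - zLen i j)

/-- Triangle inequality for the tight-triangular-form circlet coefficients: for `n ≥ 8`
divisible by 4, `d = n/2`, and pairwise distinct `i, j, k`, `f_{i,j} + f_{j,k} ≥ f_{i,k}`. -/
theorem circlet_TT_triangle (n : ℕ) (hn : 8 ≤ n) (h4 : 4 ∣ n)
    (i j k : ZMod n) (hij : i ≠ j) (hjk : j ≠ k) (hik : i ≠ k) :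
    fco (n / 2) i k ≤ fco (n / 2) i j + fco (n / 2) j k := by
  haveI : NeZero n := ⟨by omega⟩
  obtain ⟨m, rfl⟩ := h4
  have hm : 2 ≤ m := by omega
  have hd : 4 * m / 2 = 2 * m := by omega
  rw [hd]
  -- sum of the two val's of opposite differences is n
  have hsum : ∀ x y : ZMod (4 * m), x ≠ y →
      (x - y).val + (y - x).val = 4 * m ∧ 1 ≤ (x - y).val := by
    intro x y hxy
    have h1 : x - y ≠ 0 := sub_ne_zero.mpr hxy
    have h2 : y - x = -(x - y) := by ring
    have h0 : (x - y).val ≠ 0 := fun h => h1 (by rwa [ZMod.val_eq_zero] at h)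
    have hlt := ZMod.val_lt (x - y)
    rw [h2, ZMod.neg_val, if_neg h1]
    omega
  have sa := hsum i j hij
  have sa' := hsum j i hij.symm
  have sb := hsum j k hjk
  have sb' := hsum k j hjk.symm
  have sc := hsum i k hik
  have sc' := hsum k i hik.symm
  -- bounds on the lengths
  have ha : 1 ≤ zLen i j ∧ zLen i j ≤ 2 * m := by
    unfold zLen; omega
  have hb : 1 ≤ zLen j k ∧ zLen j k ≤ 2 * m := by
    unfold zLen; omega
  have hc : 1 ≤ zLen i k ∧ zLen i k ≤ 2 * m := by
    unfold zLen; omega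
  -- the two lengths at j cannot both be 2*m
  have hkey : ¬ (zLen i j = 2 * m ∧ zLen j k = 2 * m) := by
    rintro ⟨h1, h2⟩
    have e1 : (i - j).val = 2 * m := by unfold zLen at h1; omega
    have e2 : (j - k).val = 2 * m := by unfold zLen at h2; omega
    have c1 : i - j = ((2 * m : ℕ) : ZMod (4 * m)) := by
      apply ZMod.val_injective
      rw [e1, ZMod.val_cast_of_lt (by omega)]
    have c2 : j - k = ((2 * m : ℕ) : ZMod (4 * m)) := by
      apply ZMod.val_injective
      rw [e2, ZMod.val_cast_of_lt (by omega)]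
    apply hik
    have : i - k = ((2 * m : ℕ) : ZMod (4 * m)) + ((2 * m : ℕ) : ZMod (4 * m)) := by
      have : i - k = (i - j) + (j - k) := by ring
      rw [this, c1, c2]
    rw [← Nat.cast_add] at this
    have h4m : ((2 * m + 2 * m : ℕ) : ZMod (4 * m)) = 0 := by
      have : (2 * m + 2 * m : ℕ) = 4 * m := by ring
      rw [this, ZMod.natCast_self]
    rw [h4m] at this
    exact sub_eq_zero.mp this
  -- finish by parity case analysis
  unfold fco
  simp only [Nat.odd_iff]
  split_ifs <;> omega
end

section
/- Let n ≥ 8 be divisible by 4 and d = n/2. For every vertex j of the complete graph on ZMod n, there exist vertices i, k, both distinct from j, such that f_{i,j} + f_{j,k} = f_{i,k}. (For example, taking j = d + 1, the choice i = 1 and k = d works, since {1, d} has length d − 1 and f_{1,d} = (d − 2) + (d − 1) = f_{1,d+1} + f_{d+1,d}.) -/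
/-- Tightness of the triangle inequality: for `n ≥ 8` divisible by 4 and `d = n/2`,
every vertex `j` admits vertices `i, k`, both distinct from `j`, with
`f_{i,j} + f_{j,k} = f_{i,k}`. -/
theorem circlet_TT_tight (n : ℕ) (hn : 8 ≤ n) (h4 : 4 ∣ n) (j : ZMod n) :
    ∃ i k : ZMod n, i ≠ j ∧ k ≠ j ∧ fco (n / 2) i j + fco (n / 2) j k = fco (n / 2) i k := by
  haveI : NeZero n := ⟨by omega⟩
  haveI : Fact (1 < n) := ⟨by omega⟩
  obtain ⟨m, hm⟩ := h4
  have hm2 : 2 ≤ m := by omega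
  set d := n / 2 with hdd
  have hd : d = 2 * m := by omega
  have hdlt : d < n := by omega
  have hd1lt : d + 1 < n := by omega
  have hvd : ((d : ZMod n)).val = d := ZMod.val_cast_of_lt hdlt
  have hvd1 : (((d : ℕ) + 1 : ZMod n)).val = d + 1 := by
    have := ZMod.val_cast_of_lt (n := n) (a := d + 1) hd1lt
    push_cast at this
    exact this
  have hdne : (d : ZMod n) ≠ 0 := by
    intro h
    have := congrArg ZMod.val h
    rw [hvd, ZMod.val_zero] at this
    omega
  have hd1ne : ((d : ZMod n) + 1) ≠ 0 := by
    intro h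
    have := congrArg ZMod.val h
    rw [hvd1, ZMod.val_zero] at this
    omega
  have h1ne : (1 : ZMod n) ≠ 0 := by
    intro h
    have := congrArg ZMod.val h
    rw [ZMod.val_one n, ZMod.val_zero] at this
    omega
  refine ⟨j + (d : ZMod n), j - 1, ?_, ?_, ?_⟩
  · intro h
    exact hdne (by linear_combination h)
  · intro h
    exact h1ne (by linear_combination -h)
  · have e1 : zLen (j + (d : ZMod n)) j = d := by
      unfold zLen
      have h1 : j + (d : ZMod n) - j = (d : ZMod n) := by ring
      have h2 : j - (j + (d : ZMod n)) = -(d : ZMod n) := by ring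
      rw [h1, h2, hvd, ZMod.neg_val, if_neg hdne, hvd]
      omega
    have e2 : zLen j (j - 1) = 1 := by
      unfold zLen
      have h1 : j - (j - 1) = (1 : ZMod n) := by ring
      have h2 : j - 1 - j = -(1 : ZMod n) := by ring
      rw [h1, h2, ZMod.val_one n, ZMod.neg_val, if_neg h1ne, ZMod.val_one n]
      omega
    have e3 : zLen (j + (d : ZMod n)) (j - 1) = d - 1 := by
      unfold zLen
      have h1 : j + (d : ZMod n) - (j - 1) = (d : ZMod n) + 1 := by ring
      have h2 : j - 1 - (j + (d : ZMod n)) = -((d : ZMod n) + 1) := by ring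
      rw [h1, h2, hvd1, ZMod.neg_val, if_neg hd1ne, hvd1]
      omega
    unfold fco
    rw [e1, e2, e3]
    rw [if_neg (by rw [Nat.odd_iff]; omega), if_pos odd_one,
      if_pos ⟨m - 1, by omega⟩]
    omega
end

section
/- Let n ≥ 4 be divisible by 4 and d = n/2. Then every Hamiltonian cycle H on the complete graph with vertex set ZMod n satisfies Σ_{e ∈ H} f_e ≥ n²/2 − n − 2, where f_e is the tight-triangular-form circlet coefficient of the edge e. (This inequality is obtained from the circlet inequality Σ_{e ∈ H} c_{ℓ(e)} ≥ n − 2 by adding (d − 2)/2 copies of each degree constraint, using that every Hamiltonian cycle has exactly n edges.) -/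
/-- The tight-triangular-form circlet coefficient, as a function on edges. -/
def fSym {n : ℕ} (d : ℕ) : Sym2 (ZMod n) → ℕ :=
  Sym2.lift ⟨fun i j => fco d i j, fun i j => by
    simp only [fco]; rw [show zLen i j = zLen j i from by simp only [zLen]; rw [min_comm]]⟩

/-!
Write `n = 2d` and follow the cycle as positions `x₀, …, xₙ = x₀` in `ZMod n`. The twist
`τ u = (d + 1) u + d` (`circletTwist`) fixes odd residues and adds `d` to even ones, so the
coefficient of the edge `xₖ xₖ₊₁` is `d - 2` plus the circular length of `τ (xₖ₊₁ - xₖ)`, and it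
suffices to show that these twisted lengths add up to at least `2 (d - 1) = n - 2`.

The twisted positions `yₖ = (d + 1) xₖ + k d` form a closed sequence whose steps are the twisted
steps, and `yₖ ∈ {xₖ, xₖ + d}`; since the `xₖ` visit every residue, the `yₖ` meet every antipodal
pair `{z, z + d}`. Such a set contains two points at circular distance at least `d - 1`
(otherwise it would be closed under `z ↦ z - 1`, hence contain two antipodes), and a closed
sequence through two points is at least twice as long as their distance.
-/

open Finset

namespace ZMod

variable {n d : ℕ}

lemma natAbs_valMinAbs_add_le_add (a b : ZMod n) :
    (a + b).valMinAbs.natAbs ≤ a.valMinAbs.natAbs + b.valMinAbs.natAbs :=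
  (natAbs_valMinAbs_add_le a b).trans (Int.natAbs_add_le _ _)

lemma natAbs_valMinAbs_sum_le {ι : Type*} (s : Finset ι) (f : ι → ZMod n) :
    (∑ i ∈ s, f i).valMinAbs.natAbs ≤ ∑ i ∈ s, (f i).valMinAbs.natAbs :=
  le_sum_of_subadditive (fun x : ZMod n => x.valMinAbs.natAbs) (by simp)
    natAbs_valMinAbs_add_le_add s f

lemma natAbs_valMinAbs_sub_le_sum_Ico (y : ℕ → ZMod n) {i j : ℕ} (hij : i ≤ j) :
    (y j - y i).valMinAbs.natAbs ≤ ∑ k ∈ Ico i j, (y (k + 1) - y k).valMinAbs.natAbs := by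
  rw [← sum_Ico_sub y hij]
  exact natAbs_valMinAbs_sum_le _ _

lemma two_mul_natAbs_valMinAbs_sub_le_sum_range (y : ℕ → ZMod n) {m i j : ℕ}
    (hy : y m = y 0) (hi : i ≤ m) (hj : j ≤ m) :
    2 * (y i - y j).valMinAbs.natAbs ≤ ∑ k ∈ range m, (y (k + 1) - y k).valMinAbs.natAbs := by
  wlog hij : i ≤ j generalizing i j
  · rw [← natAbs_valMinAbs_neg, neg_sub]
    exact this hj hi (by omega)
  set len := fun k => (y (k + 1) - y k).valMinAbs.natAbs
  have there : (y i - y j).valMinAbs.natAbs ≤ ∑ k ∈ Ico i j, len k := by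
    rw [← natAbs_valMinAbs_neg, neg_sub]
    exact natAbs_valMinAbs_sub_le_sum_Ico y hij
  have back : (y i - y j).valMinAbs.natAbs ≤ ∑ k ∈ Ico 0 i, len k + ∑ k ∈ Ico j m, len k := by
    rw [show y i - y j = (y i - y 0) + (y m - y j) by rw [hy]; ring]
    exact (natAbs_valMinAbs_add_le_add _ _).trans <| add_le_add
      (natAbs_valMinAbs_sub_le_sum_Ico y (Nat.zero_le i)) (natAbs_valMinAbs_sub_le_sum_Ico y hj)
  rw [← Nat.Ico_zero_eq_range, ← sum_Ico_consecutive len (Nat.zero_le i) (hij.trans hj),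
    ← sum_Ico_consecutive len hij hj]
  omega

section Half

variable (hn : n = 2 * d)
include hn

lemma two_mul_natCast_eq_zero : 2 * (d : ZMod n) = 0 := by
  rw [show (2 : ZMod n) * d = ((2 * d : ℕ) : ZMod n) by push_cast; rfl, ← hn, natCast_self]

lemma natCast_mul_natCast_of_eq_two_mul (k : ℕ) :
    (d : ZMod n) * k = if Even k then 0 else (d : ZMod n) := by
  have h2d := two_mul_natCast_eq_zero hn
  rcases Nat.even_or_odd' k with ⟨q, rfl | rfl⟩
  · rw [if_pos (even_two_mul q)]
    push_cast
    linear_combination (q : ZMod n) * h2d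
  · rw [if_neg (Nat.not_even_iff_odd.mpr (odd_two_mul_add_one q))]
    push_cast
    linear_combination (q : ZMod n) * h2d

lemma natCast_mul_of_eq_two_mul [NeZero n] (u : ZMod n) :
    (d : ZMod n) * u = if Even u.val then 0 else (d : ZMod n) := by
  rw [← natCast_mul_natCast_of_eq_two_mul hn, natCast_zmod_val]

lemma natAbs_valMinAbs_add_half [NeZero n] (x : ZMod n) :
    (x + d).valMinAbs.natAbs = d - x.valMinAbs.natAbs := by
  have hd : (d : ZMod n).val = d := val_natCast_of_lt (by have := NeZero.pos n; omega)
  have hx := x.val_lt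
  rw [valMinAbs_natAbs_eq_min, valMinAbs_natAbs_eq_min]
  rcases lt_or_ge (x.val + (d : ZMod n).val) n with h | h
  · rw [val_add_of_lt h, hd]
    omega
  · rw [val_add_of_le h, hd]
    omega

lemma exists_half_sub_one_le_natAbs_valMinAbs_sub {T : Set (ZMod n)}
    (hT : ∀ x, x ∈ T ∨ x + d ∈ T) : ∃ a ∈ T, ∃ b ∈ T, d - 1 ≤ (a - b).valMinAbs.natAbs := by
  by_contra! hnear
  obtain ⟨t, ht⟩ : ∃ t, t ∈ T := (hT 0).elim (⟨0, ·⟩) (⟨_, ·⟩)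
  have hd : 1 < d := by simpa using hnear t ht t ht
  have hdist : ∀ k ≤ d, ((k : ℕ) : ZMod n).valMinAbs.natAbs = k := fun k hk => by
    rw [valMinAbs_natCast_of_le_half (by omega), Int.natAbs_natCast]
  -- `z - 1 + d` is at distance `d - 1` from `z`, so its antipode `z - 1` must lie in `T`
  have hpred : ∀ z ∈ T, z - 1 ∈ T := fun z hz => (hT (z - 1)).resolve_right fun h => by
    have := hnear _ h z hz
    rw [show z - 1 + d - z = ((d - 1 : ℕ) : ZMod n) by rw [Nat.cast_pred (by omega)]; ring,
      hdist _ (Nat.sub_le d 1)] at this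
    omega
  have hdown : ∀ k : ℕ, t - k ∈ T := fun k => by
    induction k with
    | zero => simpa using ht
    | succ k ih => simpa [sub_add_eq_sub_sub] using hpred _ ih
  have := hnear t ht _ (hdown d)
  rw [sub_sub_cancel, hdist d le_rfl] at this
  omega

end Half

end ZMod

open ZMod

variable {n d : ℕ}

lemma zLen_eq_natAbs_valMinAbs [NeZero n] (i j : ZMod n) :
    zLen i j = (j - i).valMinAbs.natAbs := by
  rw [zLen, valMinAbs_natAbs_eq_min, ← neg_sub, neg_val]
  split_ifs <;> simp_all [min_comm]

def circletTwist (d : ℕ) (u : ZMod n) : ZMod n := (d + 1) * u + d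

section Circlet

variable (hn : n = 2 * d)
include hn

lemma circletTwist_eq [NeZero n] (u : ZMod n) :
    circletTwist d u = if Even u.val then u + d else u := by
  have h2d := two_mul_natCast_eq_zero hn
  rw [circletTwist, add_one_mul, natCast_mul_of_eq_two_mul hn]
  split_ifs
  · ring
  · linear_combination h2d

lemma odd_natAbs_valMinAbs_iff [NeZero n] (x : ZMod n) :
    Odd x.valMinAbs.natAbs ↔ Odd x.val := by
  have := x.val_lt
  rw [valMinAbs_natAbs_eq_min, Nat.odd_iff, Nat.odd_iff]
  omega

lemma natAbs_valMinAbs_circletTwist [NeZero n] (u : ZMod n) :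
    (circletTwist d u).valMinAbs.natAbs =
      if Odd u.valMinAbs.natAbs then u.valMinAbs.natAbs else d - u.valMinAbs.natAbs := by
  have hodd := odd_natAbs_valMinAbs_iff hn u
  rw [circletTwist_eq hn]
  by_cases h : Even u.val
  · rw [if_pos h, if_neg (by rwa [hodd, Nat.not_odd_iff_even]), natAbs_valMinAbs_add_half hn]
  · rw [if_neg h, if_pos (by rwa [hodd, ← Nat.not_even_iff_odd])]

lemma fco_eq [NeZero n] (i j : ZMod n) :
    fco d i j = d - 2 + (circletTwist d (j - i)).valMinAbs.natAbs := by
  rw [fco, natAbs_valMinAbs_circletTwist hn, zLen_eq_natAbs_valMinAbs]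
  split_ifs <;> rfl

/-- The circlet inequality `∑ c_ℓ ≥ n - 2`, for any closed sequence of even length that visits
every residue. -/
theorem two_mul_sub_one_le_sum_circletTwist [NeZero n] {m : ℕ} (hm : Even m) (x : ℕ → ZMod n)
    (hx : x m = x 0) (hcover : ∀ z, ∃ k ≤ m, x k = z) :
    2 * (d - 1) ≤ ∑ k ∈ range m, (circletTwist d (x (k + 1) - x k)).valMinAbs.natAbs := by
  have h2d := two_mul_natCast_eq_zero hn
  set y : ℕ → ZMod n := fun k => (d + 1) * x k + k * d
  have hstep : ∀ k, y (k + 1) - y k = circletTwist d (x (k + 1) - x k) := fun k => by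
    simp only [y, circletTwist]
    push_cast
    ring
  have hclosed : y m = y 0 := by
    obtain ⟨r, rfl⟩ := hm
    simp only [y, hx]
    push_cast
    linear_combination (r : ZMod n) * h2d
  have hT : ∀ z, z ∈ y '' Set.Iic m ∨ z + d ∈ y '' Set.Iic m := fun z => by
    obtain ⟨k, hk, rfl⟩ := hcover z
    have hyk : y k = x k + d * (x k + k) := by simp only [y]; ring
    rw [natCast_mul_of_eq_two_mul hn] at hyk
    split_ifs at hyk
    · exact .inl ⟨k, hk, by rw [hyk, add_zero]⟩
    · exact .inr ⟨k, hk, hyk⟩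
  obtain ⟨_, ⟨i, hi, rfl⟩, _, ⟨j, hj, rfl⟩, hfar⟩ :=
    exists_half_sub_one_le_natAbs_valMinAbs_sub hn hT
  simp_rw [← hstep]
  exact (Nat.mul_le_mul_left 2 hfar).trans
    (two_mul_natAbs_valMinAbs_sub_le_sum_range y hclosed hi hj)

end Circlet

namespace SimpleGraph.Walk

variable {V M : Type*} [AddCommMonoid M] {G : SimpleGraph V}

lemma sum_darts_eq_sum_range_getVert {u v : V} (p : G.Walk u v) (g : V → V → M) :
    (p.darts.map fun t => g t.fst t.snd).sum =
      ∑ k ∈ range p.length, g (p.getVert k) (p.getVert (k + 1)) := by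
  induction p with
  | nil => simp
  | cons h p ih =>
    rw [darts_cons, List.map_cons, List.sum_cons, ih, length_cons, sum_range_succ', add_comm]
    simp

lemma sum_lift_edges_toFinset [DecidableEq V] {u v : V} (p : G.Walk u v) (hp : p.edges.Nodup)
    (g : {g : V → V → M // ∀ a b, g a b = g b a}) :
    ∑ e ∈ p.edges.toFinset, Sym2.lift g e =
      ∑ k ∈ range p.length, g.1 (p.getVert k) (p.getVert (k + 1)) := by
  rw [List.sum_toFinset _ hp, edges, List.map_map, ← sum_darts_eq_sum_range_getVert]
  rfl

end SimpleGraph.Walk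

theorem circlet_TT_valid_general (n : ℕ) (h4 : 4 ∣ n)
    (v : ZMod n) (w : (⊤ : SimpleGraph (ZMod n)).Walk v v)
    (hw : w.IsHamiltonianCycle) :
    n ^ 2 / 2 - n - 2 ≤ ∑ e ∈ w.edges.toFinset, fSym (n / 2) e := by
  rcases n.eq_zero_or_pos with rfl | hpos
  · simp
  have : NeZero n := ⟨hpos.ne'⟩
  set d := n / 2
  have hn : n = 2 * d := by omega
  have hlen : w.length = n := by rw [hw.length_eq, ZMod.card]
  have hcover : ∀ z, ∃ k ≤ n, w.getVert k = z := fun z => by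
    simpa [hlen, and_comm] using w.mem_support_iff_exists_getVert.mp (hw.mem_support z)
  have hcirclet := two_mul_sub_one_le_sum_circletTwist hn ⟨d, by omega⟩ w.getVert
    ((w.getVert_of_length_le hlen.le).trans w.getVert_zero.symm) hcover
  rw [fSym, w.sum_lift_edges_toFinset hw.isCycle.edges_nodup, hlen]
  simp only [fco_eq hn, sum_add_distrib, sum_const, card_range, smul_eq_mul]
  have hsq : n ^ 2 / 2 = n * d := by rw [hn]; ring_nf; omega
  rw [hsq, Nat.mul_sub]
  omega

/-- The tight-triangular-form circlet inequality: for `n ≥ 4` divisible by 4 and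
`d = n/2`, every Hamiltonian cycle `H` on `ZMod n` satisfies
`Σ_{e ∈ H} f_e ≥ n²/2 − n − 2`. -/
theorem circlet_TT_valid (n : ℕ) (hn : 4 ≤ n) (h4 : 4 ∣ n)
    (v : ZMod n) (w : (⊤ : SimpleGraph (ZMod n)).Walk v v)
    (hw : w.IsHamiltonianCycle) :
    n ^ 2 / 2 - n - 2 ≤ ∑ e ∈ w.edges.toFinset, fSym (n / 2) e :=
  circlet_TT_valid_general n h4 v w hw
end
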